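/- arXiv:2012.13035 — 5 statements merged into one kernel-verified Lean document; each statement's English description precedes it below -/
import Mathlib

section
/- Let (X,d,μ) be a space of homogeneous type with μ({x}) = 0 for all x, and β ∈ (0,∞). Then there exists C > 0 such that for all x ∈ X and R ∈ (0,∞): ∫_{{y : 0 < d(x,y) ≤ R}} (d(x,y)/R)^β / V(x,y) dμ(y) ≤ C, and ∫_{{y : d(x,y) ≥ R}} (R/d(x,y))^β / V(x,y) dμ(y) ≤ C. -/
/-!
Cut each region of integration into dyadic annuli `r ≤ d(x,y) < 2r`. On such an annulus
`V(x,y) ≥ μ(B(x,r))`, while the annulus has measure at most `μ(B(x,2r)) ≤ Cμ μ(B(x,r))`; so it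
contributes at most `Cμ` times the largest value of the weight on it. Along the annuli the weights
`(d/R)^β` and `(R/d)^β` decay like `2^(-βk)`, and the geometric series sums to a constant.
-/

open MeasureTheory
open scoped ENNReal

/-- Quasi-metric ball. -/
def qball {X : Type*} (d : X → X → ℝ) (x : X) (r : ℝ) : Set X := {y | d x y < r}

open Set

section

variable {X : Type*} (d : X → X → ℝ)

def annulus (x : X) (r : ℝ) : Set X := {y | r ≤ d x y ∧ d x y < 2 * r}

variable {d}

lemma exists_mem_annulus_zpow {x y : X} {r : ℝ} (hr : 0 < r) (hxy : 0 < d x y) :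
    ∃ m : ℤ, y ∈ annulus d x (r * 2 ^ m) := by
  obtain ⟨m, hlo, hhi⟩ := exists_mem_Ico_zpow (div_pos hxy hr) one_lt_two
  refine ⟨m, ?_, ?_⟩
  · rw [mul_comm]; exact (le_div_iff₀ hr).1 hlo
  · rw [zpow_add_one₀ two_ne_zero, div_lt_iff₀ hr] at hhi
    linarith

lemma subset_iUnion_annulus_pow {x : X} {R : ℝ} (hR : 0 < R) :
    {y | R ≤ d x y} ⊆ ⋃ k : ℕ, annulus d x (R * 2 ^ k) := by
  intro y (hy : R ≤ d x y)
  obtain ⟨m, hm⟩ := exists_mem_annulus_zpow hR (hR.trans_le hy)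
  have hm0 : 0 ≤ m := by
    by_contra! hneg
    have : (2 : ℝ) ^ m ≤ 2⁻¹ := by
      simpa using zpow_le_zpow_right₀ (by norm_num : (1 : ℝ) ≤ 2) (Int.le_sub_one_of_lt hneg)
    nlinarith [hm.2]
  lift m to ℕ using hm0
  exact mem_iUnion.2 ⟨m, by simpa using hm⟩

lemma subset_iUnion_annulus_inv_pow {x : X} {R : ℝ} (hR : 0 < R) :
    {y | 0 < d x y ∧ d x y ≤ R} ⊆ ⋃ k : ℕ, annulus d x (R * 2⁻¹ ^ k) := by
  rintro y ⟨hy0, hyR⟩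
  obtain ⟨m, hm⟩ := exists_mem_annulus_zpow hR hy0
  have hm0 : m ≤ 0 := by
    by_contra! hpos
    have : (2 : ℝ) ≤ 2 ^ m := by
      simpa using zpow_le_zpow_right₀ (by norm_num : (1 : ℝ) ≤ 2) (Int.add_one_le_of_lt hpos)
    nlinarith [hm.1]
  obtain ⟨k, rfl⟩ := Int.exists_eq_neg_ofNat hm0
  exact mem_iUnion.2 ⟨k, by simpa using hm⟩

end

section

variable {X : Type*} [MeasurableSpace X] {d : X → X → ℝ} {μ : Measure X}

lemma setLIntegral_annulus_le {x : X} {r : ℝ} {c : ℝ≥0∞}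
    (hdoub : μ (qball d x (2 * r)) ≤ c * μ (qball d x r)) {g : X → ℝ≥0∞} {w : ℝ≥0∞}
    (hg : ∀ y ∈ annulus d x r, g y ≤ w) :
    ∫⁻ y in annulus d x r,
        (if μ (qball d x (d x y)) = 0 then 0 else g y / μ (qball d x (d x y))) ∂μ ≤ c * w := by
  set m := μ (qball d x r)
  have hpt : ∀ y ∈ annulus d x r,
      (if μ (qball d x (d x y)) = 0 then 0 else g y / μ (qball d x (d x y))) ≤ w / m := by
    intro y hy
    split_ifs
    · exact zero_le
    · exact ENNReal.div_le_div (hg y hy) (measure_mono fun z (hz : d x z < r) => hz.trans_le hy.1)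
  have hmeas : μ (annulus d x r) ≤ c * m :=
    (measure_mono fun y hy => hy.2).trans hdoub
  calc _ ≤ ∫⁻ _ in annulus d x r, w / m ∂μ := setLIntegral_mono measurable_const hpt
    _ = w / m * μ (annulus d x r) := setLIntegral_const _ _
    _ ≤ w / m * (c * m) := mul_le_mul_right hmeas _
    _ = c * (m * (w / m)) := by ring
    _ ≤ c * w := mul_le_mul_right ENNReal.mul_div_le _

lemma setLIntegral_le_of_subset_iUnion_annulus {x : X} {r : ℕ → ℝ} {c : ℝ≥0∞}
    (hdoub : ∀ k, μ (qball d x (2 * r k)) ≤ c * μ (qball d x (r k)))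
    {T : Set X} (hT : T ⊆ ⋃ k, annulus d x (r k)) {g : X → ℝ≥0∞} {a q : ℝ≥0∞}
    (hg : ∀ k, ∀ y ∈ annulus d x (r k), g y ≤ a * q ^ k) :
    ∫⁻ y in T,
        (if μ (qball d x (d x y)) = 0 then 0 else g y / μ (qball d x (d x y))) ∂μ ≤
      c * a * (1 - q)⁻¹ := by
  calc _ ≤ ∫⁻ y in ⋃ k, annulus d x (r k),
          (if μ (qball d x (d x y)) = 0 then 0 else g y / μ (qball d x (d x y))) ∂μ :=
        lintegral_mono_set hT
    _ ≤ ∑' k, c * (a * q ^ k) :=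
        (lintegral_iUnion_le _ _).trans
          (ENNReal.tsum_le_tsum fun k => setLIntegral_annulus_le (hdoub k) (hg k))
    _ = c * a * (1 - q)⁻¹ := by
        rw [ENNReal.tsum_mul_left, ENNReal.tsum_mul_left, ENNReal.tsum_geometric, mul_assoc]

end

lemma ofReal_rpow_le_mul_pow {t a β : ℝ} (ht : 0 ≤ t) (ha : 0 ≤ a) (hβ : 0 ≤ β) {k : ℕ}
    (h : t ≤ a * 2⁻¹ ^ k) :
    ENNReal.ofReal (t ^ β) ≤ ENNReal.ofReal (a ^ β) * ENNReal.ofReal (2⁻¹ ^ β) ^ k := by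
  calc ENNReal.ofReal (t ^ β) ≤ ENNReal.ofReal ((a * 2⁻¹ ^ k) ^ β) :=
        ENNReal.ofReal_le_ofReal (Real.rpow_le_rpow ht h hβ)
    _ = _ := by
        rw [Real.mul_rpow ha (by positivity), ← Real.rpow_pow_comm (by norm_num),
          ENNReal.ofReal_mul (by positivity), ENNReal.ofReal_pow (by positivity)]

open scoped Classical in
theorem stmt_4_general {X : Type*} [MeasurableSpace X]
    (d : X → X → ℝ)
    (μ : Measure X) (Cμ : ℝ) (hCμ : 1 ≤ Cμ)
    (hdoub : ∀ x r, μ (qball d x (2 * r)) ≤ ENNReal.ofReal Cμ * μ (qball d x r))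
    (β : ℝ) (hβ : 0 < β) :
    ∃ C : ℝ, 0 < C ∧ ∀ (x : X) (R : ℝ), 0 < R →
      (∫⁻ y in {y | 0 < d x y ∧ d x y ≤ R},
          (if μ (qball d x (d x y)) = 0 then 0
            else ENNReal.ofReal ((d x y / R) ^ β) / μ (qball d x (d x y))) ∂μ
        ≤ ENNReal.ofReal C) ∧
      (∫⁻ y in {y | R ≤ d x y},
          (if μ (qball d x (d x y)) = 0 then 0
            else ENNReal.ofReal ((R / d x y) ^ β) / μ (qball d x (d x y))) ∂μ
        ≤ ENNReal.ofReal C) := by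
  set q : ℝ := 2⁻¹ ^ β
  have hq : q < 1 := Real.rpow_lt_one (by norm_num) (by norm_num) hβ
  have hbound : ENNReal.ofReal Cμ * ENNReal.ofReal (2 ^ β) * (1 - ENNReal.ofReal q)⁻¹ =
      ENNReal.ofReal (Cμ * 2 ^ β * (1 - q)⁻¹) := by
    rw [← ENNReal.ofReal_one, ← ENNReal.ofReal_sub _ (by positivity),
      ← ENNReal.ofReal_inv_of_pos (by linarith), ← ENNReal.ofReal_mul (by linarith),
      ← ENNReal.ofReal_mul (by positivity)]
  refine ⟨Cμ * 2 ^ β * (1 - q)⁻¹, by have := sub_pos.2 hq; positivity, fun x R hR => ⟨?_, ?_⟩⟩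
  · rw [← hbound]
    refine setLIntegral_le_of_subset_iUnion_annulus (fun k => hdoub x _)
      (subset_iUnion_annulus_inv_pow hR) fun k y hy => ?_
    have hy0 : 0 < d x y := lt_of_lt_of_le (by positivity) hy.1
    refine ofReal_rpow_le_mul_pow (by positivity) zero_le_two hβ.le ?_
    rw [div_le_iff₀ hR]
    linarith [hy.2]
  · rw [← hbound]
    refine setLIntegral_le_of_subset_iUnion_annulus (fun k => hdoub x _)
      (subset_iUnion_annulus_pow hR) fun k y hy => ?_
    have hy0 : 0 < d x y := lt_of_lt_of_le (by positivity) hy.1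
    refine ofReal_rpow_le_mul_pow (by positivity) zero_le_two hβ.le ?_
    calc R / d x y ≤ 2⁻¹ ^ k := by
          rw [div_le_iff₀ hy0, inv_pow, inv_mul_eq_div, le_div_iff₀ (by positivity)]
          exact hy.1
      _ ≤ 2 * 2⁻¹ ^ k := le_mul_of_one_le_left (by positivity) one_le_two

open scoped Classical in
/-- On a space of homogeneous type with `μ({x}) = 0` for all `x`, and `β > 0`, one has uniform
bounds `∫_{0<d(x,y)≤R} (d(x,y)/R)^β / V(x,y) dμ(y) ≤ C` and
`∫_{d(x,y)≥R} (R/d(x,y))^β / V(x,y) dμ(y) ≤ C` (integrands interpreted as `0` where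
`V(x,y) = 0`). -/
theorem stmt_4 {X : Type*} [MeasurableSpace X]
    (d : X → X → ℝ) (A₀ : ℝ) (hA₀ : 1 ≤ A₀)
    (hd_nonneg : ∀ x y, 0 ≤ d x y)
    (hd_symm : ∀ x y, d x y = d y x)
    (hd_eq : ∀ x y, d x y = 0 ↔ x = y)
    (hd_tri : ∀ x y z, d x z ≤ A₀ * (d x y + d y z))
    (μ : Measure X) (Cμ : ℝ) (hCμ : 1 ≤ Cμ)
    (hdoub : ∀ x r, μ (qball d x (2 * r)) ≤ ENNReal.ofReal Cμ * μ (qball d x r))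
    (hatom : ∀ x : X, μ {x} = 0)
    (β : ℝ) (hβ : 0 < β) :
    ∃ C : ℝ, 0 < C ∧ ∀ (x : X) (R : ℝ), 0 < R →
      (∫⁻ y in {y | 0 < d x y ∧ d x y ≤ R},
          (if μ (qball d x (d x y)) = 0 then 0
            else ENNReal.ofReal ((d x y / R) ^ β) / μ (qball d x (d x y))) ∂μ
        ≤ ENNReal.ofReal C) ∧
      (∫⁻ y in {y | R ≤ d x y},
          (if μ (qball d x (d x y)) = 0 then 0
            else ENNReal.ofReal ((R / d x y) ^ β) / μ (qball d x (d x y))) ∂μ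
        ≤ ENNReal.ofReal C) :=
  stmt_4_general d μ Cμ hCμ hdoub β hβ
end

section
/- (Khinchin-type inequality) There exists a universal constant C > 0 such that for every n ∈ ℕ and all complex numbers a₁,…,a_n, (∑_{j=1}^n |a_j|²)^{1/2} ≤ C · 2^{-n} ∑_{ε ∈ {−1,1}^n} |ε₁ a₁ + ⋯ + ε_n a_n|. -/
/-!
Write `S ε = ∑ ±a_j` and `A = ∑ ‖a_j‖²`. Splitting off the first sign, the parallelogram law gives
`∑_ε ‖S ε‖² = 2ⁿ A`, and its quartic analogue `‖z + w‖⁴ + ‖z - w‖⁴ ≤ 2‖z‖⁴ + 12‖z‖²‖w‖² + 2‖w‖⁴`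
(Cauchy–Schwarz on the cross term) gives `∑_ε ‖S ε‖⁴ ≤ 3 · 2ⁿ A²`. Hölder's inequality for
`‖S‖² = ‖S‖^{2/3} ‖S‖^{4/3}` bounds the second moment by the first and fourth,
`(∑ ‖S‖²)³ ≤ (∑ ‖S‖)² ∑ ‖S‖⁴`, whence `4ⁿ A ≤ 3 (∑_ε ‖S ε‖)²`, i.e. the inequality with `C = √3`.
-/

open Finset

section SignedSum

variable {E : Type*}

def signedSum [AddCommGroup E] {n : ℕ} (a : Fin n → E) (ε : Fin n → Bool) : E :=
  ∑ j, if ε j then a j else -a j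

theorem Fin.sum_fin_succ_pi {M α : Type*} [AddCommMonoid M] [Fintype α] {n : ℕ}
    (f : (Fin (n + 1) → α) → M) : ∑ ε, f ε = ∑ x, ∑ ε : Fin n → α, f (Fin.cons x ε) := by
  rw [← (Fin.consEquiv fun _ => α).sum_comp f, Fintype.sum_prod_type]
  rfl

theorem sum_signedSum_succ [AddCommGroup E] {M : Type*} [AddCommMonoid M] {n : ℕ}
    (F : E → M) (a : Fin (n + 1) → E) :
    ∑ ε, F (signedSum a ε) =
      ∑ ε, (F (signedSum (Fin.tail a) ε + a 0) + F (signedSum (Fin.tail a) ε - a 0)) := by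
  rw [Fin.sum_fin_succ_pi, Fintype.sum_bool, ← sum_add_distrib]
  refine sum_congr rfl fun ε _ => ?_
  simp only [signedSum, Fin.sum_univ_succ, Fin.cons_zero, Fin.cons_succ, Fin.tail, if_true,
    Bool.false_eq_true, if_false]
  rw [add_comm (a 0), neg_add_eq_sub]

variable [NormedAddCommGroup E] [InnerProductSpace ℝ E]

theorem norm_add_sq_add_norm_sub_sq (z w : E) :
    ‖z + w‖ ^ 2 + ‖z - w‖ ^ 2 = 2 * ‖z‖ ^ 2 + 2 * ‖w‖ ^ 2 := by
  rw [norm_add_sq_real, norm_sub_sq_real]; ring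

theorem norm_add_pow_four_add_norm_sub_pow_four_le (z w : E) :
    ‖z + w‖ ^ 4 + ‖z - w‖ ^ 4 ≤ 2 * ‖z‖ ^ 4 + 12 * ‖z‖ ^ 2 * ‖w‖ ^ 2 + 2 * ‖w‖ ^ 4 := by
  have hzw : inner ℝ z w ^ 2 ≤ (‖z‖ * ‖w‖) ^ 2 := by
    simpa only [sq_abs] using pow_le_pow_left₀ (abs_nonneg _) (abs_real_inner_le_norm z w) 2
  have h4 : ∀ x : E, ‖x‖ ^ 4 = (‖x‖ ^ 2) ^ 2 := fun x => by ring
  rw [h4, h4, h4, h4, norm_add_sq_real, norm_sub_sq_real]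
  nlinarith

theorem sum_norm_signedSum_sq {n : ℕ} (a : Fin n → E) :
    ∑ ε, ‖signedSum a ε‖ ^ 2 = 2 ^ n * ∑ j, ‖a j‖ ^ 2 := by
  induction n with
  | zero => simp [signedSum]
  | succ n ih =>
    rw [sum_signedSum_succ (‖·‖ ^ 2)]
    simp only [norm_add_sq_add_norm_sub_sq, sum_add_distrib, ← mul_sum, ih, sum_const, card_univ,
      Fintype.card_fun, Fintype.card_bool, Fintype.card_fin, nsmul_eq_mul, Fin.sum_univ_succ]
    simp only [Fin.tail]
    push_cast
    ring

theorem sum_norm_signedSum_pow_four_le {n : ℕ} (a : Fin n → E) :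
    ∑ ε, ‖signedSum a ε‖ ^ 4 ≤ 3 * 2 ^ n * (∑ j, ‖a j‖ ^ 2) ^ 2 := by
  induction n with
  | zero => simp [signedSum]
  | succ n ih =>
    rw [sum_signedSum_succ (‖·‖ ^ 4)]
    set B := ∑ j, ‖Fin.tail a j‖ ^ 2
    calc _ ≤ ∑ ε, (2 * ‖signedSum (Fin.tail a) ε‖ ^ 4
            + 12 * ‖signedSum (Fin.tail a) ε‖ ^ 2 * ‖a 0‖ ^ 2 + 2 * ‖a 0‖ ^ 4) :=
          sum_le_sum fun ε _ => norm_add_pow_four_add_norm_sub_pow_four_le _ _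
      _ = 2 * ∑ ε, ‖signedSum (Fin.tail a) ε‖ ^ 4 + 12 * (2 ^ n * B) * ‖a 0‖ ^ 2
            + 2 ^ (n + 1) * ‖a 0‖ ^ 4 := by
          simp only [sum_add_distrib, ← mul_sum, ← sum_mul, sum_norm_signedSum_sq, sum_const, card_univ,
            Fintype.card_fun, Fintype.card_bool, Fintype.card_fin, nsmul_eq_mul]
          push_cast; ring
      _ ≤ 2 * (3 * 2 ^ n * B ^ 2) + 12 * (2 ^ n * B) * ‖a 0‖ ^ 2 + 2 ^ (n + 1) * ‖a 0‖ ^ 4 := by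
          gcongr; exact ih _
      _ ≤ 3 * 2 ^ (n + 1) * (∑ j, ‖a j‖ ^ 2) ^ 2 := by
          rw [Fin.sum_univ_succ, pow_succ (2 : ℝ) n]
          change _ ≤ _ * (_ + B) ^ 2
          have : 0 ≤ (2 : ℝ) ^ n * ‖a 0‖ ^ 4 := by positivity
          nlinarith

end SignedSum

theorem Finset.sum_sq_pow_three_le {ι : Type*} (s : Finset ι) {f : ι → ℝ}
    (hf : ∀ i ∈ s, 0 ≤ f i) :
    (∑ i ∈ s, f i ^ 2) ^ 3 ≤ (∑ i ∈ s, f i) ^ 2 * ∑ i ∈ s, f i ^ 4 := by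
  have h13 : (∑ i ∈ s, f i ^ 2) ^ 2 ≤ (∑ i ∈ s, f i) * ∑ i ∈ s, f i ^ 3 :=
    sum_sq_le_sum_mul_sum_of_sq_le_mul s hf (fun i hi => pow_nonneg (hf i hi) 3)
      fun i _ => le_of_eq (by ring)
  have h24 : (∑ i ∈ s, f i ^ 3) ^ 2 ≤ (∑ i ∈ s, f i ^ 2) * ∑ i ∈ s, f i ^ 4 :=
    sum_sq_le_sum_mul_sum_of_sq_le_mul s (fun i _ => sq_nonneg _)
      (fun i _ => by positivity) fun i _ => le_of_eq (by ring)
  obtain hX | hX := (sum_nonneg fun i _ => sq_nonneg (f i) : 0 ≤ ∑ i ∈ s, f i ^ 2).eq_or_lt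
  · rw [← hX, zero_pow three_ne_zero]
    exact mul_nonneg (sq_nonneg _) (sum_nonneg fun i _ => by positivity)
  refine le_of_mul_le_mul_right ?_ hX
  calc (∑ i ∈ s, f i ^ 2) ^ 3 * ∑ i ∈ s, f i ^ 2 = ((∑ i ∈ s, f i ^ 2) ^ 2) ^ 2 := by ring
    _ ≤ (∑ i ∈ s, f i) ^ 2 * (∑ i ∈ s, f i ^ 3) ^ 2 := by
      rw [← mul_pow]; exact pow_le_pow_left₀ (sq_nonneg _) h13 2
    _ ≤ (∑ i ∈ s, f i) ^ 2 * ((∑ i ∈ s, f i ^ 2) * ∑ i ∈ s, f i ^ 4) := by gcongr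
    _ = _ := by ring

theorem sq_two_pow_mul_sum_norm_sq_le {E : Type*} [NormedAddCommGroup E] [InnerProductSpace ℝ E]
    {n : ℕ} (a : Fin n → E) :
    (2 ^ n) ^ 2 * ∑ j, ‖a j‖ ^ 2 ≤ 3 * (∑ ε, ‖signedSum a ε‖) ^ 2 := by
  set A := ∑ j, ‖a j‖ ^ 2
  obtain hA | hA := (show 0 ≤ A by positivity).eq_or_lt
  · rw [← hA, mul_zero]; positivity
  have hmoments : (2 ^ n * A) ^ 3 ≤ (∑ ε, ‖signedSum a ε‖) ^ 2 * (3 * 2 ^ n * A ^ 2) := by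
    rw [← sum_norm_signedSum_sq]
    exact (sum_sq_pow_three_le _ fun ε _ => norm_nonneg _).trans
      (by gcongr; exact sum_norm_signedSum_pow_four_le a)
  refine le_of_mul_le_mul_right (a := 2 ^ n * A ^ 2) ?_ (by positivity)
  linear_combination hmoments

/-- Khinchin-type inequality: there is a universal `C > 0` such that for all `n` and all complex
`a₁,…,a_n`, `(∑_j |a_j|²)^{1/2} ≤ C 2^{-n} ∑_{ε ∈ {−1,1}^n} |ε₁a₁ + ⋯ + ε_n a_n|`. -/
theorem stmt_8 :
    ∃ C : ℝ, 0 < C ∧ ∀ (n : ℕ) (a : Fin n → ℂ),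
      Real.sqrt (∑ j, ‖a j‖ ^ 2) ≤
        C * 2 ^ (-(n : ℝ)) *
          ∑ ε : Fin n → Bool, ‖∑ j, (if ε j then (1 : ℂ) else -1) * a j‖ := by
  refine ⟨Real.sqrt 3, by positivity, fun n a => ?_⟩
  have hsign : ∀ ε : Fin n → Bool, ∑ j, (if ε j then (1 : ℂ) else -1) * a j = signedSum a ε :=
    fun ε => sum_congr rfl fun j _ => by split_ifs <;> simp
  simp only [hsign, Real.rpow_neg zero_le_two, Real.rpow_natCast]
  refine Real.sqrt_le_iff.2 ⟨by positivity, ?_⟩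
  have := sq_two_pow_mul_sum_norm_sq_le a
  rw [mul_pow, mul_pow, Real.sq_sqrt zero_le_three, inv_pow, mul_right_comm, ← div_eq_mul_inv, le_div_iff₀ (by positivity)]
  linarith
end

section
/- Let (X,d,μ) be a space of homogeneous type with upper dimension ω, δ ∈ (0,1), γ ∈ (0,∞), and r ∈ (ω/(ω+γ), 1]. Let {Q_i}_{i∈I} be a countable partition of X into Borel sets such that for each i there is a point z_i with B(z_i, c δ^k) ⊂ Q_i ⊂ B(z_i, C δ^k) (for fixed constants 0 < c ≤ C and some k ∈ ℤ), and let y_i ∈ Q_i and a_i ∈ ℂ be arbitrary. Then for every k' ∈ ℤ with k' ≤ k (so δ^{k∧k'} = δ^{k'} here written as ρ := δ^{min(k,k')}) and every x ∈ X, ∑_{i∈I} μ(Q_i) [V_ρ(x) + V(x,y_i)]^{-1} (ρ/(ρ + d(x,y_i)))^γ |a_i| ≤ C' δ^{[k − min(k,k')] ω (1 − 1/r)} [M(∑_{i∈I} |a_i|^r 1_{Q_i})(x)]^{1/r}, where M is the Hardy–Littlewood maximal operator and C' does not depend on k, k', x, the points y_i, or the a_i. -/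
/-!
Split the indices according to the dyadic annulus containing `y i`: `2^(n-1) ρ ≤ d(x, y i) < 2^n ρ`.
On the `n`-th annulus the kernel is `≲ 2^(-nγ) / μ(B(x, 2^n ρ))`, and every cube `Q i` lies in a
fixed enlargement `B` of `B(x, 2^n ρ)`, of which it fills, by doubling, a fraction
`≳ (2^n ρ / δ^k)^(-ω)`. Writing `M` for `M(∑ |a_i|^r 1_{Q_i})(x)`, the average over `B` gives
`|a_i|^r ≲ (2^n ρ / δ^k)^ω M`, and then `|a_i| = |a_i|^(1-r) |a_i|^r` bounds the annulus by
`2^(-nγ) (2^n ρ / δ^k)^(ω(1/r-1)) M^(1/r)`. Since `r > ω/(ω+γ)` means `ω(1/r-1) < γ`, these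
bounds decay geometrically in `n`.
-/

open MeasureTheory
open scoped ENNReal

open Set

section QuasiMetric

variable {X : Type*} {d : X → X → ℝ}

theorem qball_mono (x : X) {s t : ℝ} (h : s ≤ t) : qball d x s ⊆ qball d x t :=
  fun _ hw => lt_of_lt_of_le hw h

structure IsQuasiMetric (d : X → X → ℝ) (A₀ : ℝ) : Prop where
  one_le : 1 ≤ A₀
  nonneg : ∀ x y, 0 ≤ d x y
  symm : ∀ x y, d x y = d y x
  triangle : ∀ x y z, d x z ≤ A₀ * (d x y + d y z)

variable {A₀ : ℝ}

theorem IsQuasiMetric.qball_subset_qball (hd : IsQuasiMetric d A₀) {x z : X} {s t : ℝ}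
    (h : d z x < s) : qball d x t ⊆ qball d z (A₀ * (s + t)) := fun w hw =>
  (hd.triangle z x w).trans_lt
    (mul_lt_mul_of_pos_left (add_lt_add h hw) (by linarith [hd.one_le]))

theorem IsQuasiMetric.qball_subset_qball_of_lt (hd : IsQuasiMetric d A₀) {x y z : X} {C R : ℝ}
    (hzy : d z y < C * R) (hxy : d x y < R) :
    qball d z (C * R) ⊆ qball d x (A₀ * (A₀ * (1 + C) + C) * R) ∧
      qball d x (A₀ * (A₀ * (1 + C) + C) * R) ⊆
        qball d z (A₀ * (A₀ * (1 + C) + A₀ * (A₀ * (1 + C) + C)) * R) := by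
  have hzx : d z x < A₀ * (1 + C) * R := by
    calc d z x ≤ A₀ * (d z y + d y x) := hd.triangle z y x
      _ < A₀ * (C * R + R) := by
          rw [hd.symm y x]
          exact mul_lt_mul_of_pos_left (add_lt_add hzy hxy) (by linarith [hd.one_le])
      _ = A₀ * (1 + C) * R := by ring
  have hxz : d x z < A₀ * (1 + C) * R := hd.symm x z ▸ hzx
  constructor
  · convert hd.qball_subset_qball hxz using 2; ring
  · convert hd.qball_subset_qball hzx using 2; ring

end QuasiMetric

section Doubling

variable {X : Type*} [MeasurableSpace X] {d : X → X → ℝ} {μ : Measure X} {Cμ : ℝ}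

theorem measure_qball_two_pow_mul_le
    (hdoub : ∀ x r, μ (qball d x (2 * r)) ≤ ENNReal.ofReal Cμ * μ (qball d x r))
    (n : ℕ) (x : X) (s : ℝ) :
    μ (qball d x (2 ^ n * s)) ≤ ENNReal.ofReal Cμ ^ n * μ (qball d x s) := by
  induction n with
  | zero => simp
  | succ n ih =>
    calc μ (qball d x (2 ^ (n + 1) * s)) = μ (qball d x (2 * (2 ^ n * s))) := by ring_nf
      _ ≤ ENNReal.ofReal Cμ * (ENNReal.ofReal Cμ ^ n * μ (qball d x s)) :=
          (hdoub _ _).trans (mul_le_mul_right ih _)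
      _ = ENNReal.ofReal Cμ ^ (n + 1) * μ (qball d x s) := by ring

theorem rpow_logb_comm {x y : ℝ} (hx : 0 < x) (hy : 0 < y) :
    x ^ Real.logb 2 y = y ^ Real.logb 2 x := by
  rw [Real.rpow_def_of_pos hx, Real.rpow_def_of_pos hy, Real.logb, Real.logb]
  ring_nf

theorem measure_qball_le_of_le (hCμ : 1 ≤ Cμ)
    (hdoub : ∀ x r, μ (qball d x (2 * r)) ≤ ENNReal.ofReal Cμ * μ (qball d x r))
    (x : X) {s t : ℝ} (hs : 0 < s) (hst : s ≤ t) :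
    μ (qball d x t) ≤ ENNReal.ofReal (Cμ * (t / s) ^ Real.logb 2 Cμ) * μ (qball d x s) := by
  have hts : 1 ≤ t / s := (one_le_div hs).2 hst
  set n := ⌈Real.logb 2 (t / s)⌉₊
  have hlog : 0 ≤ Real.logb 2 (t / s) := Real.logb_nonneg one_lt_two hts
  have htn : t ≤ 2 ^ n * s := by
    rw [← div_le_iff₀ hs, ← Real.rpow_natCast]
    calc t / s = 2 ^ Real.logb 2 (t / s) :=
          (Real.rpow_logb two_pos (by norm_num) (by linarith)).symm
      _ ≤ 2 ^ (n : ℝ) := Real.rpow_le_rpow_of_exponent_le one_le_two (Nat.le_ceil _)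
  have hCn : Cμ ^ n ≤ Cμ * (t / s) ^ Real.logb 2 Cμ := by
    calc Cμ ^ n = Cμ ^ (n : ℝ) := (Real.rpow_natCast Cμ n).symm
      _ ≤ Cμ ^ (Real.logb 2 (t / s) + 1) :=
          Real.rpow_le_rpow_of_exponent_le hCμ (Nat.ceil_lt_add_one hlog).le
      _ = Cμ * (t / s) ^ Real.logb 2 Cμ := by
          rw [Real.rpow_add (by linarith), Real.rpow_one,
            rpow_logb_comm (by linarith) (by linarith), mul_comm]
  calc μ (qball d x t) ≤ μ (qball d x (2 ^ n * s)) := measure_mono (qball_mono x htn)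
    _ ≤ ENNReal.ofReal Cμ ^ n * μ (qball d x s) := measure_qball_two_pow_mul_le hdoub n x s
    _ ≤ _ := by
        rw [← ENNReal.ofReal_pow (by linarith)]
        exact mul_le_mul_left (ENNReal.ofReal_le_ofReal hCn) _

theorem measure_qball_le_sq_mul_add
    (hdoub : ∀ x r, μ (qball d x (2 * r)) ≤ ENNReal.ofReal Cμ * μ (qball d x r))
    (x : X) {R ρ t : ℝ} (hR : R ≤ 2 * (ρ + t)) :
    μ (qball d x R) ≤ ENNReal.ofReal Cμ ^ 2 * (μ (qball d x ρ) + μ (qball d x t)) := by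
  have hmax : μ (qball d x (max ρ t)) ≤ μ (qball d x ρ) + μ (qball d x t) := by
    rcases max_choice ρ t with h | h <;> rw [h]
    · exact le_self_add
    · exact le_add_self
  calc μ (qball d x R) ≤ μ (qball d x (2 ^ 2 * max ρ t)) :=
        measure_mono (qball_mono x (by linarith [le_max_left ρ t, le_max_right ρ t]))
    _ ≤ ENNReal.ofReal Cμ ^ 2 * μ (qball d x (max ρ t)) := measure_qball_two_pow_mul_le hdoub 2 x _
    _ ≤ _ := mul_le_mul_right hmax _

end Doubling

theorem IsQuasiMetric.measure_qball_le_of_cube {X : Type*} [MeasurableSpace X] {d : X → X → ℝ}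
    {A₀ : ℝ} (hd : IsQuasiMetric d A₀) {μ : Measure X} {Cμ : ℝ} (hCμ : 1 ≤ Cμ)
    (hdoub : ∀ x r, μ (qball d x (2 * r)) ≤ ENNReal.ofReal Cμ * μ (qball d x r))
    {Q : Set X} {x y z : X} {c C s R : ℝ} (hc : 0 < c) (hcC : c ≤ C) (hs : 0 < s) (hsR : s ≤ R)
    (hzQ : qball d z (c * s) ⊆ Q) (hQz : Q ⊆ qball d z (C * s)) (hy : y ∈ Q) (hxy : d x y < R) :
    Q ⊆ qball d x (A₀ * (A₀ * (1 + C) + C) * R) ∧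
      μ (qball d x (A₀ * (A₀ * (1 + C) + C) * R)) ≤
        ENNReal.ofReal (Cμ * (A₀ * (A₀ * (1 + C) + A₀ * (A₀ * (1 + C) + C)) * R / (c * s)) ^
          Real.logb 2 Cμ) * μ Q := by
  have hA₀ := hd.one_le
  have hCsR : C * s ≤ C * R := mul_le_mul_of_nonneg_left hsR (by linarith)
  obtain ⟨hzx, hxz⟩ := hd.qball_subset_qball_of_lt ((hQz hy).trans_le hCsR) hxy
  refine ⟨hQz.trans ((qball_mono z hCsR).trans hzx), ?_⟩
  have hCL : C ≤ A₀ * (A₀ * (1 + C) + A₀ * (A₀ * (1 + C) + C)) := by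
    have hA2 : 1 ≤ A₀ * A₀ := one_le_mul_of_one_le_of_one_le hA₀ hA₀
    have hK : 0 ≤ A₀ * (A₀ * (1 + C) + C) := by
      apply mul_nonneg <;> nlinarith
    nlinarith [mul_le_mul_of_nonneg_right hA2 (by linarith : (0 : ℝ) ≤ 1 + C)]
  have hcL : c * s ≤ A₀ * (A₀ * (1 + C) + A₀ * (A₀ * (1 + C) + C)) * R :=
    calc c * s ≤ C * s := mul_le_mul_of_nonneg_right hcC hs.le
      _ ≤ C * R := hCsR
      _ ≤ _ := mul_le_mul_of_nonneg_right hCL (by linarith)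
  calc μ (qball d x (A₀ * (A₀ * (1 + C) + C) * R))
      ≤ μ (qball d z (A₀ * (A₀ * (1 + C) + A₀ * (A₀ * (1 + C) + C)) * R)) := measure_mono hxz
    _ ≤ _ := measure_qball_le_of_le hCμ hdoub z (by positivity) hcL
    _ ≤ _ := mul_le_mul_right (measure_mono hzQ) _

section Maximal

variable {X : Type*} [MeasurableSpace X] (d : X → X → ℝ) (μ : Measure X)

noncomputable def maximalFunction (f : X → ℝ≥0∞) (x : X) : ℝ≥0∞ :=
  ⨆ (s : ℝ) (_ : 0 < s), (μ (qball d x s))⁻¹ * ∫⁻ w in qball d x s, f w ∂μ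

variable {d μ}

theorem lintegral_qball_le_mul_maximalFunction (f : X → ℝ≥0∞) {x : X} {s : ℝ} (hs : 0 < s)
    (hfin : μ (qball d x s) ≠ ⊤) :
    ∫⁻ w in qball d x s, f w ∂μ ≤ μ (qball d x s) * maximalFunction d μ f x := by
  by_cases h0 : μ (qball d x s) = 0
  · simp [Measure.restrict_eq_zero.2 h0]
  calc ∫⁻ w in qball d x s, f w ∂μ
      = μ (qball d x s) * ((μ (qball d x s))⁻¹ * ∫⁻ w in qball d x s, f w ∂μ) := by
        rw [← mul_assoc, ENNReal.mul_inv_cancel h0 hfin, one_mul]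
    _ ≤ μ (qball d x s) * maximalFunction d μ f x :=
        mul_le_mul_right (le_iSup₂ (f := fun (s : ℝ) (_ : 0 < s) =>
          (μ (qball d x s))⁻¹ * ∫⁻ w in qball d x s, f w ∂μ) s hs) _

variable {ι : Type*} [Countable ι] {Q : ι → Set X}

theorem tsum_mul_measure_le_mul_maximalFunction (hQ : ∀ i, MeasurableSet (Q i)) (g : ι → ℝ≥0∞)
    {x : X} {s : ℝ} (hs : 0 < s) (hfin : μ (qball d x s) ≠ ⊤) (S : Set ι)
    (hS : ∀ i ∈ S, Q i ⊆ qball d x s) :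
    ∑' i : S, g i * μ (Q i) ≤
      μ (qball d x s) *
        maximalFunction d μ (fun w => ∑' i, (Q i).indicator (fun _ => g i) w) x := by
  calc ∑' i : S, g i * μ (Q i) = ∑' i : S, g i * μ (Q i ∩ qball d x s) := by
        refine tsum_congr fun i => ?_
        rw [inter_eq_self_of_subset_left (hS i i.2)]
    _ ≤ ∑' i, g i * μ (Q i ∩ qball d x s) :=
        ENNReal.tsum_comp_le_tsum_of_injective Subtype.val_injective _
    _ = ∫⁻ w in qball d x s, ∑' i, (Q i).indicator (fun _ => g i) w ∂μ := by
        rw [lintegral_tsum fun i => (measurable_const.indicator (hQ i)).aemeasurable]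
        refine tsum_congr fun i => ?_
        rw [lintegral_indicator_const (hQ i), Measure.restrict_apply (hQ i)]
    _ ≤ _ := lintegral_qball_le_mul_maximalFunction _ hs hfin

theorem le_mul_maximalFunction (hQ : ∀ i, MeasurableSet (Q i)) (g : ι → ℝ≥0∞) {x : X} {s : ℝ}
    (hs : 0 < s) (hfin : μ (qball d x s) ≠ ⊤) {i : ι} (hQi : Q i ⊆ qball d x s) {D : ℝ≥0∞}
    (hD : μ (qball d x s) ≤ D * μ (Q i)) (h0 : μ (Q i) ≠ 0) (htop : μ (Q i) ≠ ⊤) :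
    g i ≤ D * maximalFunction d μ (fun w => ∑' i, (Q i).indicator (fun _ => g i) w) x := by
  have h := tsum_mul_measure_le_mul_maximalFunction hQ g hs hfin {i} (by simpa using hQi)
  rw [tsum_singleton i (fun j => g j * μ (Q j))] at h
  rw [← ENNReal.mul_le_mul_iff_left h0 htop]
  calc g i * μ (Q i) ≤ μ (qball d x s) * maximalFunction d μ _ x := h
    _ ≤ D * μ (Q i) * maximalFunction d μ _ x := mul_le_mul_left hD _
    _ = _ := by ring

end Maximal

theorem ENNReal.le_rpow_mul_rpow_of_rpow_le {b T : ℝ≥0∞} {r : ℝ} (hr0 : 0 < r) (hr1 : r ≤ 1)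
    (hb : b ^ r ≤ T) : b ≤ T ^ (1 / r - 1) * b ^ r :=
  calc b = (b ^ r) ^ (1 / r - 1) * b ^ r := by
        rw [← ENNReal.rpow_mul, ← ENNReal.rpow_add_of_nonneg _ _ _ hr0.le]
        · rw [mul_sub, mul_one_div_cancel hr0.ne', mul_one, sub_add_cancel, ENNReal.rpow_one]
        · nlinarith [mul_one_div_cancel hr0.ne']
    _ ≤ T ^ (1 / r - 1) * b ^ r := by
        gcongr
        rw [sub_nonneg, le_div_iff₀ hr0]
        linarith

theorem exists_two_pow_mul_mem_Ioc {ρ t : ℝ} (hρ : 0 < ρ) (ht : 0 ≤ t) :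
    ∃ n : ℕ, 2 ^ n * ρ ∈ Ioc t (2 * (ρ + t)) := by
  have hex : ∃ n : ℕ, t < 2 ^ n * ρ := by
    obtain ⟨n, hn⟩ := pow_unbounded_of_one_lt (t / ρ) one_lt_two
    exact ⟨n, (div_lt_iff₀ hρ).1 hn⟩
  refine ⟨Nat.find hex, Nat.find_spec hex, ?_⟩
  cases hN : Nat.find hex with
  | zero => rw [pow_zero, one_mul]; linarith
  | succ n =>
    have hprev : ¬t < 2 ^ n * ρ := Nat.find_min hex (m := n) (by omega)
    rw [pow_succ]
    linarith

section Kernel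

variable {X : Type*} [MeasurableSpace X] {d : X → X → ℝ} {μ : Measure X} {Cμ : ℝ}

theorem kernel_term_le (hCμ : 1 ≤ Cμ)
    (hdoub : ∀ x r, μ (qball d x (2 * r)) ≤ ENNReal.ofReal Cμ * μ (qball d x r))
    (x : X) {ρ t R γ : ℝ} (hρ : 0 < ρ) (ht : 0 ≤ t) (hR0 : 0 < R) (hR : R ≤ 2 * (ρ + t))
    (hγ : 0 ≤ γ) (m : ℝ≥0∞) (α : ℝ) :
    m * ENNReal.ofReal ((ρ / (ρ + t)) ^ γ * α) / (μ (qball d x ρ) + μ (qball d x t)) ≤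
      ENNReal.ofReal ((2 * ρ / R) ^ γ * Cμ ^ 2) * (μ (qball d x R))⁻¹ *
        (m * ENNReal.ofReal α) := by
  have hc2 : ENNReal.ofReal Cμ ^ 2 ≠ 0 := pow_ne_zero _ (ENNReal.ofReal_pos.2 (by linarith)).ne'
  have hnum : ENNReal.ofReal ((ρ / (ρ + t)) ^ γ * α) ≤
      ENNReal.ofReal ((2 * ρ / R) ^ γ) * ENNReal.ofReal α := by
    have hratio : ρ / (ρ + t) ≤ 2 * ρ / R := by
      rw [div_le_div_iff₀ (by linarith) hR0]
      nlinarith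
    rw [ENNReal.ofReal_mul (by positivity)]
    exact mul_le_mul_left (ENNReal.ofReal_le_ofReal (Real.rpow_le_rpow (by positivity) hratio hγ)) _
  have hden : (μ (qball d x ρ) + μ (qball d x t))⁻¹ ≤
      ENNReal.ofReal Cμ ^ 2 * (μ (qball d x R))⁻¹ := by
    rw [ENNReal.inv_le_iff_inv_le, ENNReal.mul_inv (.inl hc2) (.inl (by simp)), inv_inv]
    calc (ENNReal.ofReal Cμ ^ 2)⁻¹ * μ (qball d x R)
        ≤ (ENNReal.ofReal Cμ ^ 2)⁻¹ * (ENNReal.ofReal Cμ ^ 2 *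
          (μ (qball d x ρ) + μ (qball d x t))) :=
          mul_le_mul_right (measure_qball_le_sq_mul_add hdoub x hR) _
      _ = μ (qball d x ρ) + μ (qball d x t) := by
          rw [← mul_assoc, ENNReal.inv_mul_cancel hc2 (by simp), one_mul]
  calc m * ENNReal.ofReal ((ρ / (ρ + t)) ^ γ * α) / (μ (qball d x ρ) + μ (qball d x t))
      ≤ m * (ENNReal.ofReal ((2 * ρ / R) ^ γ) * ENNReal.ofReal α) *
          (ENNReal.ofReal Cμ ^ 2 * (μ (qball d x R))⁻¹) := by
        rw [div_eq_mul_inv]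
        gcongr
    _ = _ := by
        rw [ENNReal.ofReal_mul (by positivity), ENNReal.ofReal_pow (by linarith)]
        ring

variable {ι : Type*} [Countable ι] {Q : ι → Set X} {E : Type*} [SeminormedAddCommGroup E]

theorem tsum_annulus_le (hCμ : 1 ≤ Cμ)
    (hdoub : ∀ x r, μ (qball d x (2 * r)) ≤ ENNReal.ofReal Cμ * μ (qball d x r))
    (hpos : ∀ (x : X) (r : ℝ), 0 < r → 0 < μ (qball d x r))
    (hfin : ∀ (x : X) (r : ℝ), μ (qball d x r) < ⊤)
    (hQm : ∀ i, MeasurableSet (Q i)) (hQ0 : ∀ i, μ (Q i) ≠ 0) (hQfin : ∀ i, μ (Q i) ≠ ⊤)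
    (y : ι → X) (a : ι → E) (x : X) {ρ R K D γ r : ℝ} (hρ : 0 < ρ) (hR : 0 < R) (hK : 1 ≤ K)
    (hD : 0 ≤ D) (hγ : 0 ≤ γ) (hr0 : 0 < r) (hr1 : r ≤ 1) (S : Set ι)
    (hS : ∀ i ∈ S, 0 ≤ d x (y i) ∧ R ≤ 2 * (ρ + d x (y i)))
    (hSK : ∀ i ∈ S, Q i ⊆ qball d x (K * R))
    (hSD : ∀ i ∈ S, μ (qball d x (K * R)) ≤ ENNReal.ofReal D * μ (Q i)) :
    ∑' i : S, μ (Q i) * ENNReal.ofReal ((ρ / (ρ + d x (y i))) ^ γ * ‖a i‖) /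
        (μ (qball d x ρ) + μ (qball d x (d x (y i)))) ≤
      ENNReal.ofReal ((2 * ρ / R) ^ γ * Cμ ^ 2 * (Cμ * K ^ Real.logb 2 Cμ) * D ^ (1 / r - 1)) *
        maximalFunction d μ
          (fun w => ∑' i, (Q i).indicator (fun _ => ENNReal.ofReal (‖a i‖ ^ r)) w) x ^ (1 / r) := by
  set MF := maximalFunction d μ
    (fun w => ∑' i, (Q i).indicator (fun _ => ENNReal.ofReal (‖a i‖ ^ r)) w) x
  set p := 1 / r - 1
  have hp : 0 ≤ p := by rw [sub_nonneg, le_div_iff₀ hr0]; linarith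
  have hKR : 0 < K * R := by positivity
  have hball :
      μ (qball d x (K * R)) ≤ ENNReal.ofReal (Cμ * K ^ Real.logb 2 Cμ) * μ (qball d x R) := by
    simpa [mul_div_cancel_right₀ K hR.ne'] using
      measure_qball_le_of_le hCμ hdoub x hR (le_mul_of_one_le_left hR.le hK)
  have hnorm : ∀ i, ENNReal.ofReal ‖a i‖ ^ r = ENNReal.ofReal (‖a i‖ ^ r) := fun i =>
    ENNReal.ofReal_rpow_of_nonneg (norm_nonneg _) hr0.le
  have hcoef : ∀ i ∈ S, ENNReal.ofReal ‖a i‖ ^ r ≤ ENNReal.ofReal D * MF := fun i hi => by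
    rw [hnorm]
    exact le_mul_maximalFunction hQm _ hKR (hfin _ _).ne (hSK i hi) (hSD i hi) (hQ0 i) (hQfin i)
  have hsum : ∑' i : S, ENNReal.ofReal ‖a i‖ ^ r * μ (Q i) ≤ μ (qball d x (K * R)) * MF := by
    simpa only [hnorm] using tsum_mul_measure_le_mul_maximalFunction hQm _ hKR (hfin _ _).ne S hSK
  have hMF : MF ^ p * MF = MF ^ (1 / r) := by
    conv_lhs => enter [2]; rw [← ENNReal.rpow_one MF]
    rw [← ENNReal.rpow_add_of_nonneg p 1 hp zero_le_one, sub_add_cancel]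
  calc ∑' i : S, μ (Q i) * ENNReal.ofReal ((ρ / (ρ + d x (y i))) ^ γ * ‖a i‖) /
        (μ (qball d x ρ) + μ (qball d x (d x (y i))))
      ≤ ∑' i : S, ENNReal.ofReal ((2 * ρ / R) ^ γ * Cμ ^ 2) * (μ (qball d x R))⁻¹ *
          (ENNReal.ofReal ‖a i‖ * μ (Q i)) := ENNReal.tsum_le_tsum fun i =>
        (kernel_term_le hCμ hdoub x hρ (hS i i.2).1 hR (hS i i.2).2 hγ _ _).trans_eq (by ring)
    _ ≤ ∑' i : S, ENNReal.ofReal ((2 * ρ / R) ^ γ * Cμ ^ 2) * (μ (qball d x R))⁻¹ *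
          ((ENNReal.ofReal D * MF) ^ p * (ENNReal.ofReal ‖a i‖ ^ r * μ (Q i))) :=
        ENNReal.tsum_le_tsum fun i => by
          rw [← mul_assoc _ (_ ^ r)]
          gcongr
          exact ENNReal.le_rpow_mul_rpow_of_rpow_le hr0 hr1 (hcoef i i.2)
    _ ≤ ENNReal.ofReal ((2 * ρ / R) ^ γ * Cμ ^ 2) * (μ (qball d x R))⁻¹ *
          ((ENNReal.ofReal D * MF) ^ p *
            (ENNReal.ofReal (Cμ * K ^ Real.logb 2 Cμ) * μ (qball d x R) * MF)) := by
        rw [ENNReal.tsum_mul_left, ENNReal.tsum_mul_left]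
        gcongr
        exact hsum.trans (mul_le_mul_left hball _)
    _ = ENNReal.ofReal ((2 * ρ / R) ^ γ * Cμ ^ 2) * ENNReal.ofReal (Cμ * K ^ Real.logb 2 Cμ) *
          ENNReal.ofReal D ^ p * ((μ (qball d x R))⁻¹ * μ (qball d x R)) * (MF ^ p * MF) := by
        rw [ENNReal.mul_rpow_of_nonneg _ _ hp]
        ring
    _ = _ := by
        rw [ENNReal.inv_mul_cancel (hpos x R hR).ne' (hfin x R).ne, mul_one, hMF,
          ENNReal.ofReal_rpow_of_nonneg hD hp, ← ENNReal.ofReal_mul (by positivity),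
          ← ENNReal.ofReal_mul (by positivity)]

theorem tsum_kernel_le_tsum_annuli (hCμ : 1 ≤ Cμ)
    (hdoub : ∀ x r, μ (qball d x (2 * r)) ≤ ENNReal.ofReal Cμ * μ (qball d x r))
    (hpos : ∀ (x : X) (r : ℝ), 0 < r → 0 < μ (qball d x r))
    (hfin : ∀ (x : X) (r : ℝ), μ (qball d x r) < ⊤)
    (hQm : ∀ i, MeasurableSet (Q i)) (hQ0 : ∀ i, μ (Q i) ≠ 0) (hQfin : ∀ i, μ (Q i) ≠ ⊤)
    (y : ι → X) (a : ι → E) (x : X) {ρ K γ r : ℝ} (hρ : 0 < ρ) (hK : 1 ≤ K) (hγ : 0 ≤ γ)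
    (hr0 : 0 < r) (hr1 : r ≤ 1) (hd : ∀ i, 0 ≤ d x (y i)) (D : ℕ → ℝ) (hD : ∀ n, 0 ≤ D n)
    (hcube : ∀ n i, d x (y i) < 2 ^ n * ρ →
      Q i ⊆ qball d x (K * (2 ^ n * ρ)) ∧
        μ (qball d x (K * (2 ^ n * ρ))) ≤ ENNReal.ofReal (D n) * μ (Q i)) :
    ∑' i, μ (Q i) * ENNReal.ofReal ((ρ / (ρ + d x (y i))) ^ γ * ‖a i‖) /
        (μ (qball d x ρ) + μ (qball d x (d x (y i)))) ≤
      ∑' n : ℕ, ENNReal.ofReal ((2 * ρ / (2 ^ n * ρ)) ^ γ * Cμ ^ 2 *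
          (Cμ * K ^ Real.logb 2 Cμ) * D n ^ (1 / r - 1)) *
        maximalFunction d μ
          (fun w => ∑' i, (Q i).indicator (fun _ => ENNReal.ofReal (‖a i‖ ^ r)) w) x ^ (1 / r) := by
  choose n hn using fun i => exists_two_pow_mul_mem_Ioc hρ (hd i)
  rw [← ENNReal.tsum_fiberwise _ n]
  refine ENNReal.tsum_le_tsum fun m => ?_
  have hm : ∀ i ∈ n ⁻¹' {m}, d x (y i) < 2 ^ m * ρ ∧ 2 ^ m * ρ ≤ 2 * (ρ + d x (y i)) :=
    fun i hi => by
      obtain rfl : n i = m := hi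
      exact hn i
  exact tsum_annulus_le hCμ hdoub hpos hfin hQm hQ0 hQfin y a x hρ (by positivity) hK (hD m) hγ
    hr0 hr1 _ (fun i hi => ⟨hd i, (hm i hi).2⟩) (fun i hi => (hcube m i (hm i hi).1).1)
    (fun i hi => (hcube m i (hm i hi).1).2)

end Kernel

theorem annulus_factor_eq {Cμ K L c s ρ γ ω p : ℝ} (hCμ : 0 ≤ Cμ) (hL : 0 ≤ L) (hc : 0 < c)
    (hs : 0 < s) (hρ : 0 < ρ) (n : ℕ) :
    (2 * ρ / (2 ^ n * ρ)) ^ γ * Cμ ^ 2 * (Cμ * K ^ ω) * (Cμ * (L * (2 ^ n * ρ) / (c * s)) ^ ω) ^ p =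
      2 ^ γ * Cμ ^ 2 * (Cμ * K ^ ω) * (Cμ * (L / c) ^ ω) ^ p * (ρ / s) ^ (ω * p) *
        (2 ^ (ω * p) / 2 ^ γ) ^ n := by
  have h2n : (0 : ℝ) ≤ 2 ^ n := by positivity
  have hLc : 0 ≤ L / c := by positivity
  have hρs : 0 ≤ ρ / s := by positivity
  have hshell : (2 * ρ / (2 ^ n * ρ)) ^ γ = 2 ^ γ / (2 ^ γ) ^ n := by
    rw [mul_div_mul_right _ _ hρ.ne', Real.div_rpow zero_le_two h2n,
      Real.rpow_pow_comm zero_le_two]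
  have hscale : (Cμ * (L * (2 ^ n * ρ) / (c * s)) ^ ω) ^ p =
      (Cμ * (L / c) ^ ω) ^ p * (2 ^ (ω * p)) ^ n * (ρ / s) ^ (ω * p) := by
    have : L * (2 ^ n * ρ) / (c * s) = L / c * 2 ^ n * (ρ / s) := by field_simp
    rw [this, Real.mul_rpow (mul_nonneg hLc h2n) hρs, Real.mul_rpow hLc h2n, ← mul_assoc,
      ← mul_assoc, Real.mul_rpow (by positivity) (by positivity),
      Real.mul_rpow (by positivity) (by positivity), ← Real.rpow_mul h2n, ← Real.rpow_mul hρs,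
      Real.rpow_pow_comm zero_le_two]
  rw [hshell, hscale, div_pow]
  field_simp

theorem tsum_ofReal_mul_pow_mul {A q : ℝ} (hA : 0 ≤ A) (hq0 : 0 ≤ q) (hq1 : q < 1) (M : ℝ≥0∞) :
    ∑' n : ℕ, ENNReal.ofReal (A * q ^ n) * M = ENNReal.ofReal (A / (1 - q)) * M := by
  rw [ENNReal.tsum_mul_right, ← ENNReal.ofReal_tsum_of_nonneg (fun n => by positivity)
    ((summable_geometric_of_lt_one hq0 hq1).mul_left A), tsum_mul_left,
    tsum_geometric_of_lt_one hq0 hq1, div_eq_mul_inv]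

theorem exists_tsum_kernel_le {X : Type*} [MeasurableSpace X] {d : X → X → ℝ} {A₀ : ℝ}
    (hd : IsQuasiMetric d A₀) {μ : Measure X} {Cμ : ℝ} (hCμ : 1 ≤ Cμ)
    (hdoub : ∀ x r, μ (qball d x (2 * r)) ≤ ENNReal.ofReal Cμ * μ (qball d x r))
    (hpos : ∀ (x : X) (r : ℝ), 0 < r → 0 < μ (qball d x r))
    (hfin : ∀ (x : X) (r : ℝ), μ (qball d x r) < ⊤)
    (E : Type*) [SeminormedAddCommGroup E] {γ r c C : ℝ} (hγ : 0 < γ)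
    (hr0 : Real.logb 2 Cμ / (Real.logb 2 Cμ + γ) < r) (hr1 : r ≤ 1) (hc : 0 < c) (hcC : c ≤ C) :
    ∃ C' : ℝ, 0 < C' ∧ ∀ (ι : Type*) [Countable ι] (Q : ι → Set X) (z y : ι → X) (a : ι → E)
      (s ρ : ℝ), 0 < s → s ≤ ρ → (∀ i, MeasurableSet (Q i)) →
      (∀ i, qball d (z i) (c * s) ⊆ Q i) → (∀ i, Q i ⊆ qball d (z i) (C * s)) →
      (∀ i, y i ∈ Q i) → ∀ x : X,
        ∑' i, μ (Q i) * ENNReal.ofReal ((ρ / (ρ + d x (y i))) ^ γ * ‖a i‖) /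
            (μ (qball d x ρ) + μ (qball d x (d x (y i)))) ≤
          ENNReal.ofReal (C' * (ρ / s) ^ (Real.logb 2 Cμ * (1 / r - 1))) *
            maximalFunction d μ (fun w => ∑' i,
              (Q i).indicator (fun _ => ENNReal.ofReal (‖a i‖ ^ r)) w) x ^ (1 / r) := by
  set ω := Real.logb 2 Cμ with hω_def
  set p := 1 / r - 1 with hp_def
  set K := A₀ * (A₀ * (1 + C) + C)
  set L := A₀ * (A₀ * (1 + C) + K)
  set q : ℝ := 2 ^ (ω * p) / 2 ^ γ
  have hA₀ := hd.one_le
  have hω : 0 ≤ ω := Real.logb_nonneg one_lt_two hCμ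
  have hr : 0 < r := lt_of_le_of_lt (div_nonneg hω (by linarith)) hr0
  have hq : q < 1 := by
    rw [div_lt_one (by positivity)]
    refine Real.rpow_lt_rpow_of_exponent_lt one_lt_two ?_
    rw [div_lt_iff₀ (by linarith)] at hr0
    rw [show ω * p = ω / r - ω by ring, sub_lt_iff_lt_add, div_lt_iff₀ hr]
    linarith
  have hCμ0 : 0 < Cμ := by linarith
  have hK : 1 ≤ K := one_le_mul_of_one_le_of_one_le hA₀ (by nlinarith)
  have hL : 0 < L := mul_pos (by linarith) (by nlinarith)
  have hK0 : 0 < K := by linarith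
  refine ⟨2 ^ γ * Cμ ^ 2 * (Cμ * K ^ ω) * (Cμ * (L / c) ^ ω) ^ p / (1 - q),
    div_pos (by positivity) (by linarith), ?_⟩
  intro ι _ Q z y a s ρ hs hsρ hQm hzQ hQz hyQ x
  have hρ : 0 < ρ := hs.trans_le hsρ
  have hQ0 : ∀ i, μ (Q i) ≠ 0 := fun i =>
    ((hpos (z i) _ (mul_pos hc hs)).trans_le (measure_mono (hzQ i))).ne'
  have hQfin : ∀ i, μ (Q i) ≠ ⊤ := fun i =>
    ((measure_mono (hQz i)).trans_lt (hfin (z i) _)).ne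
  have hcube : ∀ (n : ℕ) i, d x (y i) < 2 ^ n * ρ →
      Q i ⊆ qball d x (K * (2 ^ n * ρ)) ∧ μ (qball d x (K * (2 ^ n * ρ))) ≤
        ENNReal.ofReal (Cμ * (L * (2 ^ n * ρ) / (c * s)) ^ ω) * μ (Q i) := fun n i hi =>
    hd.measure_qball_le_of_cube hCμ hdoub hc hcC hs
      (hsρ.trans (le_mul_of_one_le_left hρ.le (one_le_pow₀ one_le_two))) (hzQ i) (hQz i) (hyQ i) hi
  refine (tsum_kernel_le_tsum_annuli hCμ hdoub hpos hfin hQm hQ0 hQfin y a x hρ hK hγ.le hr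
    hr1 (fun i => hd.nonneg _ _) _ (fun n => by positivity) hcube).trans_eq ?_
  rw [← hω_def, ← hp_def]
  simp only [annulus_factor_eq hCμ0.le hL.le hc hs hρ]
  rw [tsum_ofReal_mul_pow_mul (by positivity) (by positivity) hq]
  congr 2
  ring

theorem stmt_11_general {X : Type*} [MeasurableSpace X]
    (d : X → X → ℝ) (A₀ : ℝ) (hA₀ : 1 ≤ A₀)
    (hd_nonneg : ∀ x y, 0 ≤ d x y)
    (hd_symm : ∀ x y, d x y = d y x)
    (hd_tri : ∀ x y z, d x z ≤ A₀ * (d x y + d y z))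
    (μ : Measure X) (Cμ : ℝ) (hCμ : 1 ≤ Cμ)
    (hdoub : ∀ x r, μ (qball d x (2 * r)) ≤ ENNReal.ofReal Cμ * μ (qball d x r))
    (hpos : ∀ (x : X) (r : ℝ), 0 < r → 0 < μ (qball d x r))
    (hfin : ∀ (x : X) (r : ℝ), μ (qball d x r) < ⊤)
    (δ γ r c C : ℝ) (hδ0 : 0 < δ) (hδ1 : δ < 1) (hγ : 0 < γ)
    (hr0 : Real.logb 2 Cμ / (Real.logb 2 Cμ + γ) < r) (hr1 : r ≤ 1)
    (hc : 0 < c) (hcC : c ≤ C) :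
    ∃ C' : ℝ, 0 < C' ∧ ∀ (k k' : ℤ), k' ≤ k →
      ∀ (ι : Type) [Countable ι], ∀ (Q : ι → Set X) (z y : ι → X) (a : ι → ℂ),
        (∀ i, MeasurableSet (Q i)) →
        (∀ i j, i ≠ j → Disjoint (Q i) (Q j)) →
        (⋃ i, Q i) = Set.univ →
        (∀ i, qball d (z i) (c * δ ^ k) ⊆ Q i) →
        (∀ i, Q i ⊆ qball d (z i) (C * δ ^ k)) →
        (∀ i, y i ∈ Q i) →
        ∀ x : X,
          (∑' i, μ (Q i) *
              ENNReal.ofReal ((δ ^ min k k' / (δ ^ min k k' + d x (y i))) ^ γ * ‖a i‖) /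
                (μ (qball d x (δ ^ min k k')) + μ (qball d x (d x (y i)))))
            ≤ ENNReal.ofReal
                (C' * δ ^ (((k : ℝ) - ((min k k' : ℤ) : ℝ)) * Real.logb 2 Cμ * (1 - 1 / r))) *
              (⨆ (s : ℝ) (_ : 0 < s), (μ (qball d x s))⁻¹ *
                  ∫⁻ w in qball d x s,
                    ∑' i, (Q i).indicator (fun _ => ENNReal.ofReal (‖a i‖ ^ r)) w ∂μ) ^ (1 / r) := by
  obtain ⟨C', hC', hbound⟩ := exists_tsum_kernel_le ⟨hA₀, hd_nonneg, hd_symm, hd_tri⟩ hCμ hdoub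
    hpos hfin ℂ hγ hr0 hr1 hc hcC
  refine ⟨C', hC', fun k k' _ ι _ Q z y a hQm _ _ hzQ hQz hyQ x => ?_⟩
  have hscale : (δ ^ min k k' / δ ^ k) ^ (Real.logb 2 Cμ * (1 / r - 1)) =
      δ ^ (((k : ℝ) - ((min k k' : ℤ) : ℝ)) * Real.logb 2 Cμ * (1 - 1 / r)) := by
    rw [← zpow_sub₀ hδ0.ne', ← Real.rpow_intCast, ← Real.rpow_mul hδ0.le]
    push_cast
    ring_nf
  rw [← hscale]
  exact hbound ι Q z y a _ _ (zpow_pos hδ0 k)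
    (zpow_le_zpow_right_of_le_one₀ hδ0 hδ1.le (min_le_left k k')) hQm hzQ hQz hyQ x

/-- On a space of homogeneous type with upper dimension `ω = log₂ Cμ`, let `γ > 0` and
`r ∈ (ω/(ω+γ),1]`. For any countable Borel partition `{Q_i}` of `X` at scale `δ^k`
(`B(z_i, c δ^k) ⊆ Q_i ⊆ B(z_i, C δ^k)`), any points `y_i ∈ Q_i`, coefficients `a_i ∈ ℂ`,
any `k' ≤ k` and any `x`, writing `ρ = δ^{min(k,k')}`:
`∑_i μ(Q_i) (ρ/(ρ+d(x,y_i)))^γ |a_i| / [V_ρ(x)+V(x,y_i)]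
  ≤ C' δ^{(k−min(k,k'))ω(1−1/r)} [M(∑_i |a_i|^r 1_{Q_i})(x)]^{1/r}`,
where `M` is the Hardy–Littlewood maximal operator and `C'` is independent of
`k, k', x, y_i, a_i`. -/
theorem stmt_11 {X : Type*} [MeasurableSpace X]
    (d : X → X → ℝ) (A₀ : ℝ) (hA₀ : 1 ≤ A₀)
    (hd_nonneg : ∀ x y, 0 ≤ d x y)
    (hd_symm : ∀ x y, d x y = d y x)
    (hd_eq : ∀ x y, d x y = 0 ↔ x = y)
    (hd_tri : ∀ x y z, d x z ≤ A₀ * (d x y + d y z))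
    (μ : Measure X) (Cμ : ℝ) (hCμ : 1 ≤ Cμ)
    (hdoub : ∀ x r, μ (qball d x (2 * r)) ≤ ENNReal.ofReal Cμ * μ (qball d x r))
    (hpos : ∀ (x : X) (r : ℝ), 0 < r → 0 < μ (qball d x r))
    (hfin : ∀ (x : X) (r : ℝ), μ (qball d x r) < ⊤)
    (δ γ r c C : ℝ) (hδ0 : 0 < δ) (hδ1 : δ < 1) (hγ : 0 < γ)
    (hr0 : Real.logb 2 Cμ / (Real.logb 2 Cμ + γ) < r) (hr1 : r ≤ 1)
    (hc : 0 < c) (hcC : c ≤ C) :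
    ∃ C' : ℝ, 0 < C' ∧ ∀ (k k' : ℤ), k' ≤ k →
      ∀ (ι : Type) [Countable ι], ∀ (Q : ι → Set X) (z y : ι → X) (a : ι → ℂ),
        (∀ i, MeasurableSet (Q i)) →
        (∀ i j, i ≠ j → Disjoint (Q i) (Q j)) →
        (⋃ i, Q i) = Set.univ →
        (∀ i, qball d (z i) (c * δ ^ k) ⊆ Q i) →
        (∀ i, Q i ⊆ qball d (z i) (C * δ ^ k)) →
        (∀ i, y i ∈ Q i) →
        ∀ x : X,
          (∑' i, μ (Q i) *
              ENNReal.ofReal ((δ ^ min k k' / (δ ^ min k k' + d x (y i))) ^ γ * ‖a i‖) /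
                (μ (qball d x (δ ^ min k k')) + μ (qball d x (d x (y i)))))
            ≤ ENNReal.ofReal
                (C' * δ ^ (((k : ℝ) - ((min k k' : ℤ) : ℝ)) * Real.logb 2 Cμ * (1 - 1 / r))) *
              (⨆ (s : ℝ) (_ : 0 < s), (μ (qball d x s))⁻¹ *
                  ∫⁻ w in qball d x s,
                    ∑' i, (Q i).indicator (fun _ => ENNReal.ofReal (‖a i‖ ^ r)) w ∂μ) ^ (1 / r) :=
  stmt_11_general d A₀ hA₀ hd_nonneg hd_symm hd_tri μ Cμ hCμ hdoub hpos hfin δ γ r c C hδ0 hδ1 hγ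
    hr0 hr1 hc hcC
end

section
/- Let (X,d,μ) be a space of homogeneous type and let s, γ ∈ (0,∞) with s < γ. Suppose K : X×X → ℂ is measurable, satisfies the size bound |K(x,y)| ≤ [V_r(x) + V(x,y)]^{-1} (r/(r + d(x,y)))^γ for some r > 0 and all x,y, and the cancellation ∫_X K(x,y) dμ(y) = 0 for all x. If f : X → ℂ satisfies |f(y) − f(y')| ≤ L d(y,y')^s for all y,y' (i.e. f ∈ Ċ^s(X) with seminorm L), then there is C > 0, independent of K, f, r, x, such that |∫_X K(x,y) f(y) dμ(y)| ≤ C L r^s for all x ∈ X. -/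
/-!
Cancellation lets us replace `f y` by `f y - f x`. The Hölder bound `L d(x,y)^s` is then paid for
with `s` of the `γ` powers of decay, leaving `L r^s` times the majorant
`[V_r(x) + V(x,y)]⁻¹ (r/(r+d(x,y)))^(γ-s)`. That majorant has integral at most
`1 + Cμ / (1 - 2^(-(γ-s)))`: it is at most `1/V_r(x)` on `B(x,r)`, and at most
`2^(-k(γ-s)) / V_{2^k r}(x)` on the dyadic annulus `2^k r ≤ d(x,y) < 2^(k+1) r`, whose measure
doubling bounds by `Cμ V_{2^k r}(x)`; summing the geometric series gives the constant.
-/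
open MeasureTheory
open scoped ENNReal

noncomputable def sizeMajorant {X : Type*} [MeasurableSpace X] (μ : Measure X) (d : X → X → ℝ)
    (r ε : ℝ) (x y : X) : ℝ :=
  ((μ (qball d x r)).toReal + (μ (qball d x (d x y))).toReal)⁻¹ * (r / (r + d x y)) ^ ε

def dyadicAnnulus {X : Type*} (d : X → X → ℝ) (x : X) (r : ℝ) (k : ℕ) : Set X :=
  qball d x (2 ^ (k + 1) * r) \ qball d x (2 ^ k * r)

lemma integral_mul_sub_const_of_integral_eq_zero {α 𝕜 : Type*} [MeasurableSpace α] [RCLike 𝕜]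
    {μ : Measure α} {g f : α → 𝕜} (hg : Integrable g μ) (hgf : Integrable (fun y => g y * f y) μ)
    (hg0 : ∫ y, g y ∂μ = 0) (c : 𝕜) :
    ∫ y, g y * (f y - c) ∂μ = ∫ y, g y * f y ∂μ := by
  simp_rw [mul_sub]
  rw [integral_sub hgf (hg.mul_const c), integral_mul_const, hg0, zero_mul, sub_zero]

lemma div_add_rpow_mul_rpow_le {r t s : ℝ} (γ : ℝ) (hr : 0 < r) (ht : 0 ≤ t) (hs : 0 ≤ s) :
    (r / (r + t)) ^ γ * t ^ s ≤ r ^ s * (r / (r + t)) ^ (γ - s) := by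
  have ha : 0 < r / (r + t) := by positivity
  have hat : r / (r + t) * t ≤ r := by
    rw [div_mul_eq_mul_div, div_le_iff₀ (by positivity)]
    nlinarith
  calc (r / (r + t)) ^ γ * t ^ s = (r / (r + t) * t) ^ s * (r / (r + t)) ^ (γ - s) := by
        rw [Real.mul_rpow ha.le ht, mul_right_comm, ← Real.rpow_add ha, add_sub_cancel]
    _ ≤ r ^ s * (r / (r + t)) ^ (γ - s) := by gcongr

lemma div_add_rpow_le_of_two_pow_mul_le {r t ε : ℝ} {k : ℕ} (hr : 0 < r) (hε : 0 ≤ ε)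
    (hk : 2 ^ k * r ≤ t) : (r / (r + t)) ^ ε ≤ ((2 : ℝ) ^ (-ε)) ^ k := by
  have ht : 0 < t := lt_of_lt_of_le (by positivity) hk
  have hle : r / (r + t) ≤ ((2 : ℝ) ^ k)⁻¹ := by
    rw [div_le_iff₀ (by positivity), inv_mul_eq_div, le_div_iff₀ (by positivity)]
    nlinarith
  calc (r / (r + t)) ^ ε ≤ (((2 : ℝ) ^ k)⁻¹) ^ ε := by gcongr
    _ = ((2 : ℝ) ^ (-ε)) ^ k := by
        rw [← Real.rpow_natCast, ← Real.rpow_natCast, ← Real.rpow_mul zero_le_two,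
          Real.inv_rpow (by positivity), ← Real.rpow_mul zero_le_two, ← Real.rpow_neg zero_le_two,
          neg_mul, mul_comm]

lemma norm_mul_le_sizeMajorant {X 𝕜 : Type*} [MeasurableSpace X] [SeminormedRing 𝕜]
    {μ : Measure X} {d : X → X → ℝ} {r s γ L : ℝ} {x y : X} {k u : 𝕜}
    (hr : 0 < r) (hd : 0 ≤ d x y) (hs : 0 ≤ s) (hL : 0 ≤ L)
    (hk : ‖k‖ ≤ sizeMajorant μ d r γ x y) (hu : ‖u‖ ≤ L * d x y ^ s) :
    ‖k * u‖ ≤ L * r ^ s * sizeMajorant μ d r (γ - s) x y := by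
  set V := (μ (qball d x r)).toReal + (μ (qball d x (d x y))).toReal
  calc ‖k * u‖ ≤ sizeMajorant μ d r γ x y * (L * d x y ^ s) :=
        (norm_mul_le _ _).trans (mul_le_mul hk hu (norm_nonneg _) ((norm_nonneg _).trans hk))
    _ = V⁻¹ * L * ((r / (r + d x y)) ^ γ * d x y ^ s) := by rw [sizeMajorant]; ring
    _ ≤ V⁻¹ * L * (r ^ s * (r / (r + d x y)) ^ (γ - s)) :=
        mul_le_mul_of_nonneg_left (div_add_rpow_mul_rpow_le γ hr hd hs) (by positivity)
    _ = L * r ^ s * sizeMajorant μ d r (γ - s) x y := by rw [sizeMajorant]; ring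

lemma ENNReal.ofReal_toReal_inv_mul_self {m : ℝ≥0∞} (h0 : m ≠ 0) (htop : m ≠ ⊤) :
    ENNReal.ofReal m.toReal⁻¹ * m = 1 := by
  rw [← ENNReal.toReal_inv, ENNReal.ofReal_toReal (ENNReal.inv_ne_top.2 h0),
    ENNReal.inv_mul_cancel h0 htop]

section DyadicDecomposition

variable {X : Type*} {d : X → X → ℝ} {x : X} {r : ℝ}

lemma univ_subset_qball_union_iUnion_dyadicAnnulus (hr : 0 < r) :
    Set.univ ⊆ qball d x r ∪ ⋃ k, dyadicAnnulus d x r k := by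
  intro y _
  by_cases hy : d x y < r
  · exact Or.inl hy
  · obtain ⟨k, hk, hk'⟩ := exists_nat_pow_near ((one_le_div hr).2 (not_lt.1 hy)) one_lt_two
    rw [le_div_iff₀ hr] at hk
    rw [div_lt_iff₀ hr] at hk'
    exact Or.inr (Set.mem_iUnion.2 ⟨k, hk', not_lt.2 hk⟩)

variable [MeasurableSpace X] {μ : Measure X}

/-- `d` need not be measurable, so neither need the balls; a constant bound on each piece still
controls the set integral over it. -/
lemma lintegral_le_of_le_on_dyadicAnnulus (hr : 0 < r) {H : X → ℝ≥0∞} {c₀ : ℝ≥0∞}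
    {c : ℕ → ℝ≥0∞} (h₀ : ∀ y ∈ qball d x r, H y ≤ c₀)
    (hc : ∀ k y, 2 ^ k * r ≤ d x y → H y ≤ c k) :
    ∫⁻ y, H y ∂μ ≤ c₀ * μ (qball d x r) + ∑' k, c k * μ (qball d x (2 ^ (k + 1) * r)) := by
  calc ∫⁻ y, H y ∂μ ≤ ∫⁻ y in qball d x r ∪ ⋃ k, dyadicAnnulus d x r k, H y ∂μ := by
        rw [← setLIntegral_univ]
        exact lintegral_mono_set (univ_subset_qball_union_iUnion_dyadicAnnulus hr)
    _ ≤ ∫⁻ y in qball d x r, H y ∂μ + ∑' k, ∫⁻ y in dyadicAnnulus d x r k, H y ∂μ :=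
        (lintegral_union_le _ _ _).trans (add_le_add le_rfl (lintegral_iUnion_le _ _))
    _ ≤ c₀ * μ (qball d x r) + ∑' k, c k * μ (dyadicAnnulus d x r k) := by
        gcongr with k
        · exact (setLIntegral_mono measurable_const h₀).trans_eq (setLIntegral_const _ _)
        · exact (setLIntegral_mono measurable_const fun y hy => hc k y (not_lt.1 hy.2)).trans_eq
            (setLIntegral_const _ _)
    _ ≤ c₀ * μ (qball d x r) + ∑' k, c k * μ (qball d x (2 ^ (k + 1) * r)) := by
        gcongr with k
        exact Set.sdiff_subset

end DyadicDecomposition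

section SizeMajorant

variable {X : Type*} [MeasurableSpace X] {μ : Measure X} {d : X → X → ℝ} {x y : X} {r ε : ℝ}

lemma sizeMajorant_le_inv_measure_qball (hr : 0 < r) (hd : 0 ≤ d x y) (hε : 0 ≤ ε)
    (hpos : 0 < μ (qball d x r)) (hfin : μ (qball d x r) ≠ ⊤) :
    sizeMajorant μ d r ε x y ≤ (μ (qball d x r)).toReal⁻¹ := by
  have hV : 0 < (μ (qball d x r)).toReal := ENNReal.toReal_pos hpos.ne' hfin
  calc sizeMajorant μ d r ε x y ≤ (μ (qball d x r)).toReal⁻¹ * 1 := by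
        apply mul_le_mul _ _ (by positivity) (by positivity)
        · exact inv_anti₀ hV (le_add_of_nonneg_right ENNReal.toReal_nonneg)
        · exact Real.rpow_le_one (by positivity) ((div_le_one (by positivity)).2 (by linarith)) hε
    _ = (μ (qball d x r)).toReal⁻¹ := mul_one _

lemma sizeMajorant_le_of_two_pow_mul_le {k : ℕ} (hr : 0 < r) (hε : 0 ≤ ε)
    (hpos : 0 < μ (qball d x (2 ^ k * r))) (hfin : μ (qball d x (d x y)) ≠ ⊤)
    (hk : 2 ^ k * r ≤ d x y) :
    sizeMajorant μ d r ε x y ≤ (μ (qball d x (2 ^ k * r))).toReal⁻¹ * ((2 : ℝ) ^ (-ε)) ^ k := by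
  have hVk : 0 < (μ (qball d x (2 ^ k * r))).toReal :=
    ENNReal.toReal_pos hpos.ne' (ne_top_of_le_ne_top hfin (measure_mono fun _ h => h.trans_le hk))
  have hd : 0 ≤ d x y := (by positivity : (0 : ℝ) ≤ 2 ^ k * r).trans hk
  apply mul_le_mul _ (div_add_rpow_le_of_two_pow_mul_le hr hε hk) (by positivity) (by positivity)
  refine inv_anti₀ hVk ?_
  calc (μ (qball d x (2 ^ k * r))).toReal ≤ (μ (qball d x (d x y))).toReal :=
        ENNReal.toReal_mono hfin (measure_mono fun _ h => h.trans_le hk)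
    _ ≤ _ := le_add_of_nonneg_left ENNReal.toReal_nonneg

lemma ofReal_inv_mul_measure_qball_two_mul_le {Cμ a ρ : ℝ}
    (hdoub : μ (qball d x (2 * ρ)) ≤ ENNReal.ofReal Cμ * μ (qball d x ρ))
    (h0 : μ (qball d x ρ) ≠ 0) (htop : μ (qball d x ρ) ≠ ⊤) :
    ENNReal.ofReal ((μ (qball d x ρ)).toReal⁻¹ * a) * μ (qball d x (2 * ρ)) ≤
      ENNReal.ofReal Cμ * ENNReal.ofReal a :=
  calc ENNReal.ofReal ((μ (qball d x ρ)).toReal⁻¹ * a) * μ (qball d x (2 * ρ))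
      ≤ ENNReal.ofReal ((μ (qball d x ρ)).toReal⁻¹ * a) *
          (ENNReal.ofReal Cμ * μ (qball d x ρ)) := by
        gcongr
    _ = ENNReal.ofReal Cμ * ENNReal.ofReal a *
          (ENNReal.ofReal (μ (qball d x ρ)).toReal⁻¹ * μ (qball d x ρ)) := by
        rw [ENNReal.ofReal_mul (by positivity)]
        ring
    _ = ENNReal.ofReal Cμ * ENNReal.ofReal a := by
        rw [ENNReal.ofReal_toReal_inv_mul_self h0 htop, mul_one]

theorem lintegral_sizeMajorant_le {Cμ : ℝ} (hd : ∀ y, 0 ≤ d x y) (hCμ : 0 ≤ Cμ)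
    (hdoub : ∀ ρ, μ (qball d x (2 * ρ)) ≤ ENNReal.ofReal Cμ * μ (qball d x ρ))
    (hpos : ∀ ρ, 0 < ρ → 0 < μ (qball d x ρ)) (hfin : ∀ ρ, μ (qball d x ρ) < ⊤)
    (hr : 0 < r) (hε : 0 < ε) :
    ∫⁻ y, ENNReal.ofReal (sizeMajorant μ d r ε x y) ∂μ ≤
      ENNReal.ofReal (1 + Cμ * (1 - (2 : ℝ) ^ (-ε))⁻¹) := by
  set q : ℝ := (2 : ℝ) ^ (-ε)
  have hq : q < 1 := Real.rpow_lt_one_of_one_lt_of_neg one_lt_two (neg_neg_of_pos hε)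
  have hposk : ∀ k : ℕ, 0 < μ (qball d x (2 ^ k * r)) := fun k => hpos _ (by positivity)
  calc ∫⁻ y, ENNReal.ofReal (sizeMajorant μ d r ε x y) ∂μ
      ≤ ENNReal.ofReal (μ (qball d x r)).toReal⁻¹ * μ (qball d x r) +
          ∑' k : ℕ, ENNReal.ofReal ((μ (qball d x (2 ^ k * r))).toReal⁻¹ * q ^ k) *
            μ (qball d x (2 ^ (k + 1) * r)) :=
        lintegral_le_of_le_on_dyadicAnnulus hr
          (fun y _ => ENNReal.ofReal_le_ofReal
            (sizeMajorant_le_inv_measure_qball hr (hd y) hε.le (hpos r hr) (hfin r).ne))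
          fun k y hk => ENNReal.ofReal_le_ofReal
            (sizeMajorant_le_of_two_pow_mul_le hr hε.le (hposk k) (hfin _).ne hk)
    _ ≤ 1 + ∑' k : ℕ, ENNReal.ofReal Cμ * ENNReal.ofReal q ^ k := by
        rw [ENNReal.ofReal_toReal_inv_mul_self (hpos r hr).ne' (hfin r).ne]
        refine add_le_add le_rfl (ENNReal.tsum_le_tsum fun k => ?_)
        rw [pow_succ', mul_assoc, ← ENNReal.ofReal_pow (by positivity)]
        exact ofReal_inv_mul_measure_qball_two_mul_le (hdoub _) (hposk k).ne' (hfin _).ne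
    _ = ENNReal.ofReal (1 + Cμ * (1 - q)⁻¹) := by
        rw [ENNReal.tsum_mul_left, ENNReal.tsum_geometric, ENNReal.ofReal_add zero_le_one
            (by have := sub_pos.2 hq; positivity), ENNReal.ofReal_one, ENNReal.ofReal_mul hCμ,
          ENNReal.ofReal_inv_of_pos (sub_pos.2 hq), ENNReal.ofReal_sub 1 (by positivity),
          ENNReal.ofReal_one]

end SizeMajorant

theorem stmt_14_general {X : Type*} [MeasurableSpace X]
    (d : X → X → ℝ)
    (hd_nonneg : ∀ x y, 0 ≤ d x y)
    (μ : Measure X) (Cμ : ℝ) (hCμ : 1 ≤ Cμ)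
    (hdoub : ∀ x r, μ (qball d x (2 * r)) ≤ ENNReal.ofReal Cμ * μ (qball d x r))
    (hpos : ∀ (x : X) (r : ℝ), 0 < r → 0 < μ (qball d x r))
    (hfin : ∀ (x : X) (r : ℝ), μ (qball d x r) < ⊤)
    (s γ : ℝ) (hs : 0 < s) (hsγ : s < γ) :
    ∃ C : ℝ, 0 < C ∧ ∀ (r : ℝ), 0 < r → ∀ (K : X → X → ℂ) (f : X → ℂ) (L : ℝ), 0 ≤ L →
      (∀ x, Integrable (fun y => K x y) μ) →
      (∀ x, Integrable (fun y => K x y * f y) μ) →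
      (∀ x y, ‖K x y‖ ≤
        ((μ (qball d x r)).toReal + (μ (qball d x (d x y))).toReal)⁻¹ *
          (r / (r + d x y)) ^ γ) →
      (∀ x, ∫ y, K x y ∂μ = 0) →
      (∀ y y', ‖f y - f y'‖ ≤ L * d y y' ^ s) →
      ∀ x, ‖∫ y, K x y * f y ∂μ‖ ≤ C * L * r ^ s := by
  have hε : 0 < γ - s := sub_pos.2 hsγ
  have hq : (2 : ℝ) ^ (-(γ - s)) < 1 := Real.rpow_lt_one_of_one_lt_of_neg one_lt_two (by linarith)
  set C := 1 + Cμ * (1 - (2 : ℝ) ^ (-(γ - s)))⁻¹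
  have hC : 0 < C := by have := sub_pos.2 hq; positivity
  refine ⟨C, hC, fun r hr K f L hL hKint hKfint hsize hcanc hHold x => ?_⟩
  have hpointwise : ∀ y, ENNReal.ofReal ‖K x y * (f y - f x)‖ ≤
      ENNReal.ofReal (L * r ^ s) * ENNReal.ofReal (sizeMajorant μ d r (γ - s) x y) := fun y => by
    rw [← ENNReal.ofReal_mul (by positivity)]
    exact ENNReal.ofReal_le_ofReal (norm_mul_le_sizeMajorant hr (hd_nonneg x y) hs.le hL
      (hsize x y) ((norm_sub_rev _ _).trans_le (hHold x y)))
  rw [← integral_mul_sub_const_of_integral_eq_zero (hKint x) (hKfint x) (hcanc x) (f x)]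
  refine (norm_integral_le_lintegral_norm _).trans
    (ENNReal.toReal_le_of_le_ofReal (by positivity) ?_)
  calc ∫⁻ y, ENNReal.ofReal ‖K x y * (f y - f x)‖ ∂μ
      ≤ ENNReal.ofReal (L * r ^ s) *
          ∫⁻ y, ENNReal.ofReal (sizeMajorant μ d r (γ - s) x y) ∂μ := by
        rw [← lintegral_const_mul' _ _ ENNReal.ofReal_ne_top]
        exact lintegral_mono hpointwise
    _ ≤ ENNReal.ofReal (L * r ^ s) * ENNReal.ofReal C := by
        gcongr
        exact lintegral_sizeMajorant_le (hd_nonneg x) (by linarith) (hdoub x) (hpos x) (hfin x)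
          hr hε
    _ = ENNReal.ofReal (C * L * r ^ s) := by
        rw [← ENNReal.ofReal_mul (by positivity), mul_comm, mul_assoc]

/-- On a space of homogeneous type, let `0 < s < γ`. If `K` satisfies the size bound
`|K(x,y)| ≤ [V_r(x)+V(x,y)]^{-1} (r/(r+d(x,y)))^γ` (for some `r > 0`) and the cancellation
`∫ K(x,·) dμ = 0`, and `f` is `s`-Hölder with seminorm `L`, then
`|∫ K(x,y) f(y) dμ(y)| ≤ C L r^s` with `C` independent of `K, f, r, x`. -/
theorem stmt_14 {X : Type*} [MeasurableSpace X]
    (d : X → X → ℝ) (A₀ : ℝ) (hA₀ : 1 ≤ A₀)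
    (hd_nonneg : ∀ x y, 0 ≤ d x y)
    (hd_symm : ∀ x y, d x y = d y x)
    (hd_eq : ∀ x y, d x y = 0 ↔ x = y)
    (hd_tri : ∀ x y z, d x z ≤ A₀ * (d x y + d y z))
    (μ : Measure X) (Cμ : ℝ) (hCμ : 1 ≤ Cμ)
    (hdoub : ∀ x r, μ (qball d x (2 * r)) ≤ ENNReal.ofReal Cμ * μ (qball d x r))
    (hpos : ∀ (x : X) (r : ℝ), 0 < r → 0 < μ (qball d x r))
    (hfin : ∀ (x : X) (r : ℝ), μ (qball d x r) < ⊤)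
    (s γ : ℝ) (hs : 0 < s) (hsγ : s < γ) :
    ∃ C : ℝ, 0 < C ∧ ∀ (r : ℝ), 0 < r → ∀ (K : X → X → ℂ) (f : X → ℂ) (L : ℝ), 0 ≤ L →
      (∀ x, Integrable (fun y => K x y) μ) →
      (∀ x, Integrable (fun y => K x y * f y) μ) →
      (∀ x y, ‖K x y‖ ≤
        ((μ (qball d x r)).toReal + (μ (qball d x (d x y))).toReal)⁻¹ *
          (r / (r + d x y)) ^ γ) →
      (∀ x, ∫ y, K x y ∂μ = 0) →
      (∀ y y', ‖f y - f y'‖ ≤ L * d y y' ^ s) →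
      ∀ x, ‖∫ y, K x y * f y ∂μ‖ ≤ C * L * r ^ s :=
  stmt_14_general d hd_nonneg μ Cμ hCμ hdoub hpos hfin s γ hs hsγ
end

section
/- (Cotlar–Stein lemma) Let H be a Hilbert space and (T_k)_{k=1}^N bounded linear operators on H. Suppose there is a sequence (a(j))_{j∈ℤ} of nonnegative numbers with A := ∑_{j∈ℤ} √(a(j)) < ∞ such that for all k, l, ‖T_k T_l^*‖ ≤ a(k−l) and ‖T_k^* T_l‖ ≤ a(k−l). Then ‖∑_{k=1}^N T_k‖ ≤ A. -/
open ContinuousLinearMap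

/-!
Write `S = ∑ T_k`. Expanding `(S S*)ⁿ` gives a sum of words `T_{i₀} T_{i₁}* T_{i₂} ⋯ T_{i_{2n-1}}*`
in which every two adjacent letters have product of norm at most `a(i_j - i_{j+1})`, and every
letter has norm at most `A`. Grouping a word into adjacent pairs starting at the first letter, or
at the second, gives two bounds whose product is at most `A² ∏ⱼ a(i_j - i_{j+1})`, so the word has
norm at most `A ∏ⱼ √a(i_j - i_{j+1})`. Summing over the indices one at a time, each sum is at most
`A` except the last, which is at most `N`; hence `‖S‖²ⁿ = ‖(S S*)ⁿ‖ ≤ N A²ⁿ`, and letting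
`n = 2ᵏ → ∞` removes the factor `N`.
-/

open Filter Topology in
theorem le_of_forall_pow_two_pow_le_mul {x y C : ℝ} (hy : 0 ≤ y)
    (h : ∀ k : ℕ, x ^ 2 ^ k ≤ C * y ^ 2 ^ k) : x ≤ y := by
  by_contra! hyx
  have hx : 0 < x := hy.trans_lt hyx
  set q := y / x
  have hq : q < 1 := (div_lt_one hx).2 hyx
  have hlim : Tendsto (fun k : ℕ => C * q ^ 2 ^ k) atTop (𝓝 0) := by
    simpa using ((tendsto_pow_atTop_nhds_zero_of_lt_one (div_nonneg hy hx.le) hq).comp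
      (tendsto_pow_atTop_atTop_of_one_lt one_lt_two)).const_mul C
  obtain ⟨k, hk⟩ := (hlim.eventually (gt_mem_nhds one_pos)).exists
  have hxk : 1 * x ^ 2 ^ k ≤ C * q ^ 2 ^ k * x ^ 2 ^ k := by
    rw [one_mul, mul_assoc, ← mul_pow, div_mul_cancel₀ _ hx.ne']
    exact h k
  exact hk.not_ge (le_of_mul_le_mul_right hxk (by positivity))

theorem List.prod_ofFn_ite_even {M : Type*} [Monoid M] (x y : M) (n : ℕ) :
    (List.ofFn fun j : Fin (2 * n) => if Even (j : ℕ) then x else y).prod = (x * y) ^ n := by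
  rw [List.ofFn_mul', List.prod_flatten, List.map_ofFn]
  simp [List.ofFn_succ, Function.comp_def, Nat.even_add_one, parity_simps]

theorem sum_prod_chain_le {ι : Type*} [Fintype ι] {f : ι → ι → ℝ} {A : ℝ} (hA : 0 ≤ A)
    (hf : ∀ k l, 0 ≤ f k l) (hcol : ∀ l, ∑ k, f k l ≤ A) (m : ℕ) :
    ∑ i : Fin (m + 1) → ι, ∏ j : Fin m, f (i j.castSucc) (i j.succ) ≤
      Fintype.card ι * A ^ m := by
  induction m with
  | zero => simp
  | succ m ih =>
    calc ∑ i : Fin (m + 2) → ι, ∏ j : Fin (m + 1), f (i j.castSucc) (i j.succ)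
        = ∑ i : Fin (m + 1) → ι, ∑ k : ι,
            ∏ j : Fin (m + 1), f ((Fin.cons k i : Fin (m + 2) → ι) j.castSucc)
              ((Fin.cons k i : Fin (m + 2) → ι) j.succ) := by
          rw [← Fintype.sum_prod_type_right']
          exact ((Fin.consEquiv fun _ => ι).sum_comp _).symm
      _ = ∑ i : Fin (m + 1) → ι,
            (∑ k, f k (i 0)) * ∏ j : Fin m, f (i j.castSucc) (i j.succ) := by
          simp [Fin.prod_univ_succ, Finset.sum_mul]
      _ ≤ ∑ i : Fin (m + 1) → ι, A * ∏ j : Fin m, f (i j.castSucc) (i j.succ) := by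
          gcongr with i
          · exact Finset.prod_nonneg fun j _ => hf _ _
          · exact hcol _
      _ ≤ Fintype.card ι * A ^ (m + 1) := by
          rw [← Finset.mul_sum, pow_succ']
          nlinarith

section Words

variable {E ι : Type*}

def wordProd [Monoid E] (Y : ℕ → ι → E) {m : ℕ} (i : Fin m → ι) : E :=
  (List.ofFn fun j => Y j (i j)).prod

theorem wordProd_succ [Monoid E] (Y : ℕ → ι → E) {m : ℕ} (i : Fin (m + 1) → ι) :
    wordProd Y i = Y 0 (i 0) * wordProd (fun j => Y (j + 1)) (Fin.tail i) := by
  simp [wordProd, List.ofFn_succ, Fin.tail]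

theorem sum_wordProd [Semiring E] [Fintype ι] (Y : ℕ → ι → E) (m : ℕ) :
    ∑ i : Fin m → ι, wordProd Y i = (List.ofFn fun j : Fin m => ∑ k, Y j k).prod :=
  ((MultilinearMap.mkPiAlgebraFin ℕ m E).map_sum fun j k => Y j k).symm

variable [NormedRing E] {c : ℝ} {w : ι → ι → ℝ}

theorem norm_wordProd_mul_norm_wordProd_tail_le {m : ℕ} {Y : ℕ → ι → E}
    (hY : ∀ j k, ‖Y j k‖ ≤ c) (hYY : ∀ j k l, ‖Y j k * Y (j + 1) l‖ ≤ w k l)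
    (i : Fin (m + 2) → ι) :
    ‖wordProd Y i‖ * ‖wordProd (fun j => Y (j + 1)) (Fin.tail i)‖ ≤
      c * ∏ j : Fin (m + 1), w (i j.castSucc) (i j.succ) := by
  induction m generalizing Y with
  | zero =>
    have hw : 0 ≤ w (i 0) (i 1) := (norm_nonneg _).trans (hYY 0 _ _)
    simpa [wordProd, Fin.tail, mul_comm c] using
      mul_le_mul (hYY 0 (i 0) (i 1)) (hY 1 (i 1)) (norm_nonneg _) hw
  | succ m ih =>
    have hpair : ‖wordProd Y i‖ ≤ w (i 0) (i 1) *
        ‖wordProd (fun j => Y (j + 2)) (Fin.tail (Fin.tail i))‖ := by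
      rw [wordProd_succ Y, wordProd_succ (fun j => Y (j + 1)), ← mul_assoc]
      exact (norm_mul_le _ _).trans (mul_le_mul_of_nonneg_right (hYY 0 _ _) (norm_nonneg _))
    have htail := ih (Y := fun j => Y (j + 1)) (fun j => hY _) (fun j => hYY _) (Fin.tail i)
    have hw : 0 ≤ w (i 0) (i 1) := (norm_nonneg _).trans (hYY 0 _ _)
    calc ‖wordProd Y i‖ * ‖wordProd (fun j => Y (j + 1)) (Fin.tail i)‖
        ≤ w (i 0) (i 1) * (‖wordProd (fun j => Y (j + 1)) (Fin.tail i)‖ *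
            ‖wordProd (fun j => Y (j + 2)) (Fin.tail (Fin.tail i))‖) := by
          nlinarith [norm_nonneg (wordProd (fun j => Y (j + 1)) (Fin.tail i))]
      _ ≤ w (i 0) (i 1) *
            (c * ∏ j : Fin (m + 1), w (Fin.tail i j.castSucc) (Fin.tail i j.succ)) := by
          gcongr
      _ = c * ∏ j : Fin (m + 2), w (i j.castSucc) (i j.succ) := by
          conv_rhs => rw [Fin.prod_univ_succ]
          simp only [Fin.tail, Fin.succ_castSucc, Fin.castSucc_zero, Fin.succ_zero_eq_one]
          ring

theorem norm_wordProd_le {m : ℕ} {Y : ℕ → ι → E}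
    (hY : ∀ j k, ‖Y j k‖ ≤ c) (hYY : ∀ j k l, ‖Y j k * Y (j + 1) l‖ ≤ w k l)
    (i : Fin (m + 2) → ι) :
    ‖wordProd Y i‖ ≤ c * ∏ j : Fin (m + 1), √(w (i j.castSucc) (i j.succ)) := by
  have hc : 0 ≤ c := (norm_nonneg _).trans (hY 0 (i 0))
  have hw : ∀ k l, 0 ≤ w k l := fun k l => (norm_nonneg _).trans (hYY 0 k l)
  rw [← pow_le_pow_iff_left₀ (norm_nonneg _) (by positivity) two_ne_zero]
  calc ‖wordProd Y i‖ ^ 2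
      ≤ ‖wordProd Y i‖ * (c * ‖wordProd (fun j => Y (j + 1)) (Fin.tail i)‖) := by
        rw [sq, wordProd_succ Y i]
        gcongr
        exact (norm_mul_le _ _).trans (mul_le_mul_of_nonneg_right (hY 0 _) (norm_nonneg _))
    _ ≤ c * (c * ∏ j : Fin (m + 1), w (i j.castSucc) (i j.succ)) := by
        rw [mul_left_comm]
        exact mul_le_mul_of_nonneg_left (norm_wordProd_mul_norm_wordProd_tail_le hY hYY i) hc
    _ = (c * ∏ j : Fin (m + 1), √(w (i j.castSucc) (i j.succ))) ^ 2 := by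
        simp only [mul_pow, ← Finset.prod_pow, Real.sq_sqrt (hw _ _)]
        ring

end Words

theorem CStarRing.norm_sum_le_of_almostOrthogonal {E ι : Type*} [NormedRing E] [StarRing E]
    [CStarRing E] [Fintype ι] {T : ι → E} {w : ι → ι → ℝ} {A : ℝ} (hA : 0 ≤ A)
    (h₁ : ∀ k l, ‖T k * star (T l)‖ ≤ w k l) (h₂ : ∀ k l, ‖star (T k) * T l‖ ≤ w k l)
    (hcol : ∀ l, ∑ k, √(w k l) ≤ A) :
    ‖∑ k, T k‖ ≤ A := by
  set S := ∑ k, T k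
  let Y : ℕ → ι → E := fun j k => if Even j then T k else star (T k)
  have hT : ∀ k, ‖T k‖ ≤ A := fun k => calc
    ‖T k‖ = √‖T k * star (T k)‖ := by
      rw [CStarRing.norm_self_mul_star, Real.sqrt_mul_self (norm_nonneg _)]
    _ ≤ √(w k k) := Real.sqrt_le_sqrt (h₁ k k)
    _ ≤ A := (Finset.single_le_sum (fun k' _ => Real.sqrt_nonneg (w k' k))
        (Finset.mem_univ k)).trans (hcol k)
  have hY : ∀ j k, ‖Y j k‖ ≤ A := by
    intro j k
    by_cases hj : Even j <;> simp [Y, hj, hT k]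
  have hYY : ∀ j k l, ‖Y j k * Y (j + 1) l‖ ≤ w k l := by
    intro j k l
    by_cases hj : Even j <;> simp [Y, hj, Nat.even_add_one, h₁, h₂]
  have hrow : ∀ j, ∑ k, Y j k = if Even j then S else star S := by
    intro j
    split_ifs with hj <;> simp [Y, S, hj, star_sum]
  have hpow : ∀ n : ℕ, ‖(S * star S) ^ (n + 1)‖ ≤ Fintype.card ι * (A ^ 2) ^ (n + 1) := by
    intro n
    have hexp : ∑ i : Fin (2 * n + 2) → ι, wordProd Y i = (S * star S) ^ (n + 1) := by
      simp_rw [sum_wordProd, hrow]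
      exact List.prod_ofFn_ite_even S (star S) (n + 1)
    calc ‖(S * star S) ^ (n + 1)‖
        ≤ ∑ i : Fin (2 * n + 2) → ι,
            A * ∏ j : Fin (2 * n + 1), √(w (i j.castSucc) (i j.succ)) := by
          rw [← hexp]
          exact (norm_sum_le _ _).trans (Finset.sum_le_sum fun i _ => norm_wordProd_le hY hYY i)
      _ ≤ A * (Fintype.card ι * A ^ (2 * n + 1)) := by
          rw [← Finset.mul_sum]
          gcongr
          exact sum_prod_chain_le hA (fun _ _ => Real.sqrt_nonneg _) hcol _
      _ = Fintype.card ι * (A ^ 2) ^ (n + 1) := by ring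
  have hsq : ‖S‖ ^ 2 ≤ A ^ 2 := by
    refine le_of_forall_pow_two_pow_le_mul (C := Fintype.card ι) (sq_nonneg A) fun k => ?_
    obtain ⟨n, hn⟩ := Nat.exists_eq_add_one_of_ne_zero (pow_ne_zero k two_ne_zero)
    rw [sq, ← CStarRing.norm_self_mul_star, ← (IsSelfAdjoint.mul_star_self S).norm_pow_two_pow,
      hn]
    exact hpow n
  exact (pow_le_pow_iff_left₀ (norm_nonneg _) hA two_ne_zero).1 hsq

theorem stmt_17_general {H : Type*} [NormedAddCommGroup H] [InnerProductSpace ℂ H] [CompleteSpace H]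
    (N : ℕ) (T : Fin N → H →L[ℂ] H) (a : ℤ → ℝ)
    (hsum : Summable fun j : ℤ => Real.sqrt (a j))
    (h₁ : ∀ k l : Fin N, ‖T k ∘L adjoint (T l)‖ ≤ a (((k : ℕ) : ℤ) - ((l : ℕ) : ℤ)))
    (h₂ : ∀ k l : Fin N, ‖adjoint (T k) ∘L T l‖ ≤ a (((k : ℕ) : ℤ) - ((l : ℕ) : ℤ))) :
    ‖∑ k, T k‖ ≤ ∑' j : ℤ, Real.sqrt (a j) := by
  refine CStarRing.norm_sum_le_of_almostOrthogonal
    (tsum_nonneg fun j : ℤ => Real.sqrt_nonneg (a j))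
    (w := fun k l : Fin N => a (((k : ℕ) : ℤ) - ((l : ℕ) : ℤ))) (fun k l => ?_) (fun k l => ?_)
    fun l => ?_
  · simpa [star_eq_adjoint, ContinuousLinearMap.mul_def] using h₁ k l
  · simpa [star_eq_adjoint, ContinuousLinearMap.mul_def] using h₂ k l
  · rw [← tsum_fintype (L := SummationFilter.unconditional (Fin N))]
    exact tsum_comp_le_tsum_of_inj hsum (fun _ => Real.sqrt_nonneg _)
      fun k k' h => Fin.ext (by simpa using h)

/-- Cotlar–Stein lemma: if `(T_k)_{k=1}^N` are bounded operators on a Hilbert space with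
`‖T_k T_l^*‖ ≤ a(k−l)` and `‖T_k^* T_l‖ ≤ a(k−l)` for a nonnegative sequence `a` with
`A = ∑_j √a(j) < ∞`, then `‖∑_k T_k‖ ≤ A`. -/
theorem stmt_17 {H : Type*} [NormedAddCommGroup H] [InnerProductSpace ℂ H] [CompleteSpace H]
    (N : ℕ) (T : Fin N → H →L[ℂ] H) (a : ℤ → ℝ) (ha : ∀ j, 0 ≤ a j)
    (hsum : Summable fun j : ℤ => Real.sqrt (a j))
    (h₁ : ∀ k l : Fin N, ‖T k ∘L adjoint (T l)‖ ≤ a (((k : ℕ) : ℤ) - ((l : ℕ) : ℤ)))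
    (h₂ : ∀ k l : Fin N, ‖adjoint (T k) ∘L T l‖ ≤ a (((k : ℕ) : ℤ) - ((l : ℕ) : ℤ))) :
    ‖∑ k, T k‖ ≤ ∑' j : ℤ, Real.sqrt (a j) :=
  stmt_17_general N T a hsum h₁ h₂
end
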